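/- arXiv:2410.18437 — 3 statements merged into one kernel-verified Lean document; each statement's English description precedes it below -/
import Mathlib

section
/- Assume 𝒳 and 𝒴 are Polish spaces, ζ, η are bounded continuous symmetric positive-definite kernels (all finite quadratic forms Σᵢⱼ cᵢcⱼ ζ(xᵢ,xⱼ) are nonnegative, and likewise for η), k is a bounded continuous symmetric positive-definite function on ℝ (so κ_b(z,z′)=k((z−z′)/b) is a positive-definite kernel), and E[ζ(X₁,X₂)²] < ∞ and E[η(Y₁,Y₂)²] < ∞. Then the random-lifter dependence measure is nonnegative: T_{ζ,η,κ_b}(X,Y) ≥ 0. -/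
open MeasureTheory

noncomputable section



lemma integrable_of_bdd {α : Type*} [MeasurableSpace α] {μ : Measure α}
    [IsFiniteMeasure μ] {f : α → ℝ} (hf : Measurable f) {C : ℝ} (hC : ∀ x, |f x| ≤ C) :
    Integrable f μ :=
  (integrable_const C).mono' hf.aestronglyMeasurable
    (Filter.Eventually.of_forall fun x => by simpa [Real.norm_eq_abs] using hC x)

open scoped MatrixOrder

lemma schur_quadform {n : ℕ} (A B : Fin n → Fin n → ℝ)
    (hBsymm : ∀ i j, B i j = B j i)
    (hA : ∀ c : Fin n → ℝ, 0 ≤ ∑ i, ∑ j, c i * c j * A i j)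
    (hB : ∀ c : Fin n → ℝ, 0 ≤ ∑ i, ∑ j, c i * c j * B i j)
    (c : Fin n → ℝ) :
    0 ≤ ∑ i, ∑ j, c i * c j * (A i j * B i j) := by
  classical
  set M : Matrix (Fin n) (Fin n) ℝ := Matrix.of B with hM
  have hMpsd : M.PosSemidef := by
    rw [Matrix.posSemidef_iff_dotProduct_mulVec]
    constructor
    · ext i j
      simp [hM, Matrix.conjTranspose_apply, hBsymm j i]
    · intro x
      have h0 := hB x
      have heq : dotProduct (star x) (M.mulVec x)
          = ∑ i, ∑ j, x i * x j * B i j := by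
        simp only [dotProduct, Matrix.mulVec, Pi.star_apply, star_trivial,
          Finset.mul_sum]
        exact Finset.sum_congr rfl fun i _ => Finset.sum_congr rfl fun j _ => by
          simp [hM]; ring
      rw [heq]; exact h0
  obtain ⟨D, hD⟩ : ∃ D : Matrix (Fin n) (Fin n) ℝ, M = D.conjTranspose * D :=
    CStarAlgebra.nonneg_iff_eq_star_mul_self.mp hMpsd.nonneg
  have hBij : ∀ i j, B i j = ∑ l, D l i * D l j := by
    intro i j
    have h1 : M i j = (D.conjTranspose * D) i j := by rw [← hD]
    simpa [hM, Matrix.mul_apply, Matrix.conjTranspose_apply] using h1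
  have key : ∑ i, ∑ j, c i * c j * (A i j * B i j)
      = ∑ l, ∑ i, ∑ j, (c i * D l i) * (c j * D l j) * A i j := by
    have h1 : ∑ i, ∑ j, c i * c j * (A i j * B i j)
        = ∑ i, ∑ j, ∑ l, (c i * D l i) * (c j * D l j) * A i j := by
      refine Finset.sum_congr rfl fun i _ => Finset.sum_congr rfl fun j _ => ?_
      rw [hBij i j, Finset.mul_sum, Finset.mul_sum]
      exact Finset.sum_congr rfl fun l _ => by ring
    rw [h1]
    rw [show (∑ i, ∑ j, ∑ l, (c i * D l i) * (c j * D l j) * A i j)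
        = ∑ i, ∑ l, ∑ j, (c i * D l i) * (c j * D l j) * A i j from
      Finset.sum_congr rfl fun i _ => Finset.sum_comm]
    exact Finset.sum_comm
  rw [key]
  exact Finset.sum_nonneg fun l _ => hA fun i => c i * D l i

lemma posdef_fintype {Ω : Type*} (K : Ω → Ω → ℝ)
    (hK : ∀ (n : ℕ) (p : Fin n → Ω) (c : Fin n → ℝ),
      0 ≤ ∑ i, ∑ j, c i * c j * K (p i) (p j))
    {ι : Type*} [Fintype ι] (p : ι → Ω) (c : ι → ℝ) :
    0 ≤ ∑ s : ι, ∑ t : ι, c s * c t * K (p s) (p t) := by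
  classical
  let e := Fintype.equivFin ι
  have h := hK (Fintype.card ι) (fun i => p (e.symm i)) (fun i => c (e.symm i))
  have h2 : ∑ s : ι, ∑ t : ι, c s * c t * K (p s) (p t)
      = ∑ i, ∑ j, c (e.symm i) * c (e.symm j) * K (p (e.symm i)) (p (e.symm j)) := by
    rw [← Equiv.sum_comp e.symm (fun s => ∑ t : ι, c s * c t * K (p s) (p t))]
    exact Finset.sum_congr rfl fun i _ =>
      (Equiv.sum_comp e.symm fun t => c (e.symm i) * c t * K (p (e.symm i)) (p t)).symm
  rw [h2]; exact h

lemma posdef_pair {Ω : Type*} (K : Ω → Ω → ℝ)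
    (hK : ∀ (n : ℕ) (p : Fin n → Ω) (c : Fin n → ℝ),
      0 ≤ ∑ i, ∑ j, c i * c j * K (p i) (p j))
    (n : ℕ) (v : Fin n → Ω × Ω) (c : Fin n → ℝ) :
    0 ≤ ∑ i, ∑ j, c i * c j *
      (K (v i).1 (v j).1 - K (v i).1 (v j).2 - K (v i).2 (v j).1 + K (v i).2 (v j).2) := by
  classical
  have key := posdef_fintype K hK (ι := Fin n ⊕ Fin n)
      (Sum.elim (fun i => (v i).1) (fun i => (v i).2))
      (Sum.elim c (fun i => -c i))
  refine le_trans key (le_of_eq ?_)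
  simp only [Fintype.sum_sum_type, Sum.elim_inl, Sum.elim_inr]
  have inner : ∀ i, (∑ j, c i * c j *
        (K (v i).1 (v j).1 - K (v i).1 (v j).2 - K (v i).2 (v j).1 + K (v i).2 (v j).2))
      = ∑ j, c i * c j * K (v i).1 (v j).1 + ∑ j, c i * -c j * K (v i).1 (v j).2
          + (∑ j, -c i * c j * K (v i).2 (v j).1 + ∑ j, -c i * -c j * K (v i).2 (v j).2) := by
    intro i
    calc ∑ j, c i * c j *
          (K (v i).1 (v j).1 - K (v i).1 (v j).2 - K (v i).2 (v j).1 + K (v i).2 (v j).2)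
        = ∑ j, (c i * c j * K (v i).1 (v j).1 + c i * -c j * K (v i).1 (v j).2
            + (-c i * c j * K (v i).2 (v j).1 + -c i * -c j * K (v i).2 (v j).2)) :=
          Finset.sum_congr rfl fun j _ => by ring
      _ = _ := by
          rw [Finset.sum_add_distrib, Finset.sum_add_distrib, Finset.sum_add_distrib]
  rw [← Finset.sum_add_distrib]
  exact Finset.sum_congr rfl fun i _ => (inner i).symm



lemma pi_map_pair {Ω : Type*} [MeasurableSpace Ω] (m : Measure Ω) [IsProbabilityMeasure m]
    {n : ℕ} {i j : Fin n} (hij : i ≠ j) :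
    (Measure.pi (fun _ : Fin n => m)).map (fun u => (u i, u j)) = m.prod m := by
  classical
  refine (Measure.prod_eq fun s t hs ht => ?_).symm
  have hmeas : Measurable fun u : Fin n → Ω => (u i, u j) :=
    (measurable_pi_apply i).prodMk (measurable_pi_apply j)
  rw [Measure.map_apply hmeas (hs.prod ht)]
  have hpre : (fun u : Fin n → Ω => (u i, u j)) ⁻¹' (s ×ˢ t)
      = Set.pi Set.univ (Function.update (Function.update (fun _ => Set.univ) i s) j t) := by
    ext u
    simp only [Set.mem_preimage, Set.mem_prod, Set.mem_pi, Set.mem_univ, true_implies]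
    constructor
    · rintro ⟨hus, hut⟩ l
      rcases eq_or_ne l j with rfl | hlj
      · rw [Function.update_self]; exact hut
      · rw [Function.update_of_ne hlj]
        rcases eq_or_ne l i with rfl | hli
        · rw [Function.update_self]; exact hus
        · rw [Function.update_of_ne hli]; trivial
    · intro h
      refine ⟨?_, ?_⟩
      · have := h i
        rwa [Function.update_of_ne hij, Function.update_self] at this
      · have := h j
        rwa [Function.update_self] at this
  rw [hpre, Measure.pi_pi]
  have hprod : ∀ l : Fin n,
      m (Function.update (Function.update (fun _ => Set.univ) i s) j t l)
        = Function.update (Function.update (fun _ => (1 : ENNReal)) i (m s)) j (m t) l := by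
    intro l
    rcases eq_or_ne l j with rfl | hlj
    · rw [Function.update_self, Function.update_self]
    · rw [Function.update_of_ne hlj, Function.update_of_ne hlj]
      rcases eq_or_ne l i with rfl | hli
      · rw [Function.update_self, Function.update_self]
      · rw [Function.update_of_ne hli, Function.update_of_ne hli, measure_univ]
  rw [Finset.prod_congr rfl fun l _ => hprod l]
  rw [← Finset.prod_subset (Finset.subset_univ ({i, j} : Finset (Fin n)))
    (fun l _ hl => ?_)]
  · rw [Finset.prod_pair hij, Function.update_of_ne hij, Function.update_self,
      Function.update_self]
  · simp only [Finset.mem_insert, Finset.mem_singleton, not_or] at hl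
    rw [Function.update_of_ne hl.2, Function.update_of_ne hl.1]

lemma mmd_nonneg {Ω : Type*} [MeasurableSpace Ω] (K : Ω → Ω → ℝ)
    (hKm : Measurable fun p : Ω × Ω => K p.1 p.2)
    (C : ℝ) (hC : ∀ v w, |K v w| ≤ C)
    (hKsym : ∀ v w, K v w = K w v)
    (hKpos : ∀ (n : ℕ) (p : Fin n → Ω) (c : Fin n → ℝ),
      0 ≤ ∑ i, ∑ j, c i * c j * K (p i) (p j))
    (π ρ : Measure Ω) [IsProbabilityMeasure π] [IsProbabilityMeasure ρ] :
    0 ≤ (∫ p, K p.1 p.2 ∂(π.prod π)) + (∫ p, K p.1 p.2 ∂(ρ.prod ρ))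
      - 2 * ∫ p, K p.1 p.2 ∂(π.prod ρ) := by
  have hne : Nonempty Ω := by
    by_contra h
    rw [not_nonempty_iff] at h
    have h1 : (Set.univ : Set Ω) = ∅ := Set.univ_eq_empty_iff.mpr h
    have h2 := measure_univ (μ := π)
    rw [h1, measure_empty] at h2
    exact zero_ne_one h2
  have hC0 : 0 ≤ C := by
    obtain ⟨v⟩ := hne
    exact le_trans (abs_nonneg _) (hC v v)
  set m : Measure (Ω × Ω) := π.prod ρ with hm_def
  set K' : Ω × Ω → Ω × Ω → ℝ :=
    fun v w => K v.1 w.1 - K v.1 w.2 - K v.2 w.1 + K v.2 w.2 with hK'def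
  have hK'm : Measurable fun p : (Ω × Ω) × (Ω × Ω) => K' p.1 p.2 := by
    apply Measurable.add
    · apply Measurable.sub
      · apply Measurable.sub
        · exact hKm.comp (measurable_fst.fst.prodMk measurable_snd.fst)
        · exact hKm.comp (measurable_fst.fst.prodMk measurable_snd.snd)
      · exact hKm.comp (measurable_fst.snd.prodMk measurable_snd.fst)
    · exact hKm.comp (measurable_fst.snd.prodMk measurable_snd.snd)
  have hK'bd : ∀ v w, |K' v w| ≤ 4 * C := by
    intro v w
    have h1 := abs_le.mp (hC v.1 w.1)
    have h2 := abs_le.mp (hC v.1 w.2)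
    have h3 := abs_le.mp (hC v.2 w.1)
    have h4 := abs_le.mp (hC v.2 w.2)
    rw [abs_le]
    constructor <;> (simp only [hK'def]) <;> linarith [h1.1, h1.2, h2.1, h2.2, h3.1, h3.2, h4.1, h4.2]
  set S : ℝ := ∫ p, K' p.1 p.2 ∂(m.prod m) with hS_def
  -- Step A : identify S with the four double integrals
  have i1 : Integrable (fun p : (Ω × Ω) × (Ω × Ω) => K p.1.1 p.2.1) (m.prod m) :=
    integrable_of_bdd (hKm.comp (measurable_fst.fst.prodMk measurable_snd.fst))
      (fun p => hC _ _)
  have i2 : Integrable (fun p : (Ω × Ω) × (Ω × Ω) => K p.1.1 p.2.2) (m.prod m) :=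
    integrable_of_bdd (hKm.comp (measurable_fst.fst.prodMk measurable_snd.snd))
      (fun p => hC _ _)
  have i3 : Integrable (fun p : (Ω × Ω) × (Ω × Ω) => K p.1.2 p.2.1) (m.prod m) :=
    integrable_of_bdd (hKm.comp (measurable_fst.snd.prodMk measurable_snd.fst))
      (fun p => hC _ _)
  have i4 : Integrable (fun p : (Ω × Ω) × (Ω × Ω) => K p.1.2 p.2.2) (m.prod m) :=
    integrable_of_bdd (hKm.comp (measurable_fst.snd.prodMk measurable_snd.snd))
      (fun p => hC _ _)
  have hmfst : m.map Prod.fst = π := by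
    rw [hm_def, Measure.map_fst_prod]; simp
  have hmsnd : m.map Prod.snd = ρ := by
    rw [hm_def, Measure.map_snd_prod]; simp
  have hmap4 : ∀ (f g : Ω × Ω → Ω), Measurable f → Measurable g →
      (m.map f = π ∨ m.map f = ρ) → True → ∀ (μ1 μ2 : Measure Ω),
        m.map f = μ1 → m.map g = μ2 →
      ∫ p, K (f p.1) (g p.2) ∂(m.prod m) = ∫ p, K p.1 p.2 ∂(μ1.prod μ2) := by
    intro f g hf hg _ _ μ1 μ2 h1 h2
    have hmm : (m.prod m).map (Prod.map f g) = μ1.prod μ2 := by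
      rw [← Measure.map_prod_map _ _ hf hg, h1, h2]
    rw [← hmm, integral_map ((hf.prodMap hg).aemeasurable)
      (by rw [hmm]; exact hKm.aestronglyMeasurable)]
    simp only [Prod.map_fst, Prod.map_snd]
  have e11 : ∫ p, K p.1.1 p.2.1 ∂(m.prod m) = ∫ p, K p.1 p.2 ∂(π.prod π) :=
    hmap4 Prod.fst Prod.fst measurable_fst measurable_fst (Or.inl hmfst) trivial π π hmfst hmfst
  have e12 : ∫ p, K p.1.1 p.2.2 ∂(m.prod m) = ∫ p, K p.1 p.2 ∂(π.prod ρ) :=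
    hmap4 Prod.fst Prod.snd measurable_fst measurable_snd (Or.inl hmfst) trivial π ρ hmfst hmsnd
  have e21 : ∫ p, K p.1.2 p.2.1 ∂(m.prod m) = ∫ p, K p.1 p.2 ∂(ρ.prod π) :=
    hmap4 Prod.snd Prod.fst measurable_snd measurable_fst (Or.inr hmsnd) trivial ρ π hmsnd hmfst
  have e22 : ∫ p, K p.1.2 p.2.2 ∂(m.prod m) = ∫ p, K p.1 p.2 ∂(ρ.prod ρ) :=
    hmap4 Prod.snd Prod.snd measurable_snd measurable_snd (Or.inr hmsnd) trivial ρ ρ hmsnd hmsnd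
  have hswap : ∫ p, K p.1 p.2 ∂(ρ.prod π) = ∫ p, K p.1 p.2 ∂(π.prod ρ) := by
    have h := integral_prod_swap (μ := π) (ν := ρ) (fun p : Ω × Ω => K p.2 p.1)
    simp only [Prod.snd_swap, Prod.fst_swap] at h
    rw [show (fun z : Ω × Ω => K z.2 z.1) = fun z : Ω × Ω => K z.1 z.2 from
      funext fun z => hKsym _ _] at h
    exact h
  have stepA : S = (∫ p, K p.1 p.2 ∂(π.prod π)) + (∫ p, K p.1 p.2 ∂(ρ.prod ρ))
      - 2 * ∫ p, K p.1 p.2 ∂(π.prod ρ) := by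
    have : S = ∫ p, (K p.1.1 p.2.1 - K p.1.1 p.2.2 - K p.1.2 p.2.1 + K p.1.2 p.2.2)
        ∂(m.prod m) := rfl
    have i12 : Integrable (fun p : (Ω × Ω) × (Ω × Ω) =>
        K p.1.1 p.2.1 - K p.1.1 p.2.2) (m.prod m) := i1.sub i2
    have i123 : Integrable (fun p : (Ω × Ω) × (Ω × Ω) =>
        K p.1.1 p.2.1 - K p.1.1 p.2.2 - K p.1.2 p.2.1) (m.prod m) := i12.sub i3
    rw [this, integral_add i123 i4, integral_sub i12 i3,
      integral_sub i1 i2, e11, e12, e21, e22, hswap]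
    ring
  -- Step B : sampling bound
  have main : ∀ n : ℕ, 0 < n → 0 ≤ ((n : ℝ) - 1) * S + 4 * C := by
    intro n hn
    set Q : Measure (Fin n → Ω × Ω) := Measure.pi (fun _ : Fin n => m) with hQ_def
    haveI : IsProbabilityMeasure Q := by rw [hQ_def]; infer_instance
    have hterm_meas : ∀ i j : Fin n, Measurable fun u : Fin n → Ω × Ω => K' (u i) (u j) := by
      intro i j
      have h : Measurable (fun u : Fin n → Ω × Ω => (u i, u j)) :=
        (measurable_pi_apply i).prodMk (measurable_pi_apply j)
      have h2 := hK'm.comp h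
      exact h2
    have hterm_int : ∀ i j : Fin n, Integrable (fun u => K' (u i) (u j)) Q :=
      fun i j => integrable_of_bdd (hterm_meas i j) (fun u => hK'bd _ _)
    have hFnonneg : ∀ u : Fin n → Ω × Ω, 0 ≤ ∑ i, ∑ j, K' (u i) (u j) := by
      intro u
      have := posdef_pair K hKpos n u (fun _ => 1)
      simpa [hK'def] using this
    have h0 : 0 ≤ ∫ u, (∑ i, ∑ j, K' (u i) (u j)) ∂Q :=
      integral_nonneg fun u => hFnonneg u
    have hsplit : ∫ u, (∑ i, ∑ j, K' (u i) (u j)) ∂Q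
        = ∑ i, ∑ j, ∫ u, K' (u i) (u j) ∂Q := by
      rw [integral_finset_sum _ (fun i _ => integrable_finset_sum _ fun j _ => hterm_int i j)]
      exact Finset.sum_congr rfl fun i _ => integral_finset_sum _ fun j _ => hterm_int i j
    have hoff : ∀ i j : Fin n, i ≠ j → ∫ u, K' (u i) (u j) ∂Q = S := by
      intro i j hij
      have hmapq : Q.map (fun u => (u i, u j)) = m.prod m := pi_map_pair m hij
      calc ∫ u, K' (u i) (u j) ∂Q
          = ∫ p, K' p.1 p.2 ∂(Q.map fun u => (u i, u j)) :=
            (integral_map ((measurable_pi_apply i).prodMk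
              (measurable_pi_apply j)).aemeasurable
              (by rw [hmapq]; exact hK'm.aestronglyMeasurable)).symm
        _ = S := by rw [hmapq]
    have hdiag : ∀ i : Fin n, ∫ u, K' (u i) (u i) ∂Q ≤ 4 * C := by
      intro i
      have hb := norm_integral_le_of_norm_le_const (μ := Q)
        (f := fun u => K' (u i) (u i)) (C := 4 * C)
        (Filter.Eventually.of_forall fun u => by
          simpa [Real.norm_eq_abs] using hK'bd (u i) (u i))
      rw [probReal_univ, mul_one] at hb
      rw [Real.norm_eq_abs] at hb
      exact le_trans (le_abs_self _) hb
    have hrow : ∀ i : Fin n, ∑ j, ∫ u, K' (u i) (u j) ∂Q ≤ ((n : ℝ) - 1) * S + 4 * C := by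
      intro i
      rw [← Finset.sum_erase_add _ _ (Finset.mem_univ i)]
      have h1 : ∑ j ∈ Finset.univ.erase i, ∫ u, K' (u i) (u j) ∂Q = ((n : ℝ) - 1) * S := by
        rw [Finset.sum_congr rfl fun j hj => hoff i j (Ne.symm (Finset.ne_of_mem_erase hj))]
        rw [Finset.sum_const, Finset.card_erase_of_mem (Finset.mem_univ i),
          Finset.card_univ, Fintype.card_fin, nsmul_eq_mul]
        have hn1 : (1:ℕ) ≤ n := hn
        push_cast [hn1]
        ring
      rw [h1]
      exact add_le_add le_rfl (hdiag i)
    have hsum_le : ∑ i : Fin n, ∑ j : Fin n, ∫ u, K' (u i) (u j) ∂Q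
        ≤ (n : ℝ) * (((n : ℝ) - 1) * S + 4 * C) := by
      calc ∑ i : Fin n, ∑ j : Fin n, ∫ u, K' (u i) (u j) ∂Q
          ≤ ∑ _i : Fin n, (((n : ℝ) - 1) * S + 4 * C) :=
            Finset.sum_le_sum fun i _ => hrow i
        _ = (n : ℝ) * (((n : ℝ) - 1) * S + 4 * C) := by
            rw [Finset.sum_const, Finset.card_univ, Fintype.card_fin, nsmul_eq_mul]
    have hres : (0:ℝ) ≤ (n : ℝ) * (((n : ℝ) - 1) * S + 4 * C) :=
      le_trans (by rw [← hsplit]; exact h0) hsum_le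
    have hnpos : (0:ℝ) < n := by exact_mod_cast hn
    nlinarith [hres, hnpos]
  -- conclude S ≥ 0
  have hS : 0 ≤ S := by
    by_contra hneg
    push_neg at hneg
    obtain ⟨N, hN⟩ := exists_nat_gt (4 * C / (-S) + 1)
    have h4 : 0 ≤ 4 * C / (-S) := div_nonneg (by linarith) (by linarith)
    have hN1 : (1:ℝ) < N := lt_of_le_of_lt (by linarith) hN
    have hNpos : 0 < N := by exact_mod_cast lt_trans zero_lt_one hN1
    have hmain := main N hNpos
    have hgt : 4 * C / (-S) < (N : ℝ) - 1 := by linarith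
    rw [div_lt_iff₀ (by linarith : (0:ℝ) < -S)] at hgt
    nlinarith [hmain, hgt]
  rw [stepA] at hS
  exact hS



/-- The random-lifter dependence measure `T_{ζ,η,κ_b}(X,Y)`, expressed through integrals
against the law `ω` of `(X,Y)` and the law `μZ` of the independent lifter `Z`
(the triples `(Xᵢ,Yᵢ,Zᵢ)` are i.i.d. with law `ω ⊗ μZ`). -/
def Tlift {𝒳 𝒴 : Type*} [MeasurableSpace 𝒳] [MeasurableSpace 𝒴]
    (ζ : 𝒳 → 𝒳 → ℝ) (η : 𝒴 → 𝒴 → ℝ) (k : ℝ → ℝ) (b : ℝ)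
    (ω : Measure (𝒳 × 𝒴)) (μZ : Measure ℝ) : ℝ :=
  (∫ w₁, (∫ w₂, ζ w₁.1.1 w₂.1.1 * (η w₁.1.2 w₂.1.2 * k ((w₁.2 - w₂.2) / b))
      ∂(ω.prod μZ)) ∂(ω.prod μZ))
  + (∫ p, ζ p.1.1 p.2.1 ∂(ω.prod ω)) *
      (∫ w₁, (∫ w₂, η w₁.1.2 w₂.1.2 * k ((w₁.2 - w₂.2) / b) ∂(ω.prod μZ)) ∂(ω.prod μZ))
  - 2 * ∫ w₁, (∫ w₂, (∫ w₃, ζ w₁.1.1 w₂.1.1 * (η w₁.1.2 w₃.1.2 * k ((w₁.2 - w₃.2) / b))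
      ∂(ω.prod μZ)) ∂(ω.prod μZ)) ∂(ω.prod μZ)

/-- If `𝒳, 𝒴` are Polish spaces, `ζ, η` are bounded continuous symmetric
positive-definite kernels, `k` is a bounded continuous symmetric positive-definite function
on `ℝ` (yielding the kernel `κ_b(z,z′) = k((z−z′)/b)`), the lifter `Z` has a Lebesgue
density `g` and is independent of `(X,Y)`, and `ζ, η` have finite second moments, then the
random-lifter dependence measure is nonnegative: `T_{ζ,η,κ_b}(X,Y) ≥ 0`. -/
theorem statement1 {𝒳 𝒴 : Type*}
    [TopologicalSpace 𝒳] [PolishSpace 𝒳] [MeasurableSpace 𝒳] [BorelSpace 𝒳]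
    [TopologicalSpace 𝒴] [PolishSpace 𝒴] [MeasurableSpace 𝒴] [BorelSpace 𝒴]
    (ζ : 𝒳 → 𝒳 → ℝ) (η : 𝒴 → 𝒴 → ℝ) (k : ℝ → ℝ) (b : ℝ) (hb : 0 < b)
    -- ζ: bounded continuous symmetric positive definite
    (hζ_cont : Continuous fun p : 𝒳 × 𝒳 => ζ p.1 p.2)
    (Cζ : ℝ) (hζ_bdd : ∀ x x', |ζ x x'| ≤ Cζ)
    (hζ_symm : ∀ x x', ζ x x' = ζ x' x)
    (hζ_posdef : ∀ (n : ℕ) (x : Fin n → 𝒳) (c : Fin n → ℝ),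
      0 ≤ ∑ i, ∑ j, c i * c j * ζ (x i) (x j))
    -- η: bounded continuous symmetric positive definite
    (hη_cont : Continuous fun p : 𝒴 × 𝒴 => η p.1 p.2)
    (Cη : ℝ) (hη_bdd : ∀ y y', |η y y'| ≤ Cη)
    (hη_symm : ∀ y y', η y y' = η y' y)
    (hη_posdef : ∀ (n : ℕ) (y : Fin n → 𝒴) (c : Fin n → ℝ),
      0 ≤ ∑ i, ∑ j, c i * c j * η (y i) (y j))
    -- k: bounded continuous symmetric positive definite function on ℝ,
    -- a nonnegative kernel with unit integral
    (hk_cont : Continuous k)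
    (Ck : ℝ) (hk_bdd : ∀ u, |k u| ≤ Ck)
    (hk_symm : ∀ u, k (-u) = k u)
    (hk_nonneg : ∀ u, 0 ≤ k u) (hk_int : ∫ u, k u = 1)
    (hk_posdef : ∀ (n : ℕ) (z : Fin n → ℝ) (c : Fin n → ℝ),
      0 ≤ ∑ i, ∑ j, c i * c j * k (z i - z j))
    -- joint law ω of (X,Y) and law μZ of the lifter Z, with Lebesgue density g
    (ω : Measure (𝒳 × 𝒴)) [IsProbabilityMeasure ω]
    (μZ : Measure ℝ) [IsProbabilityMeasure μZ] (g : ℝ → ℝ)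
    (hg : μZ = (volume : Measure ℝ).withDensity fun z => ENNReal.ofReal (g z))
    -- finite second moments
    (hζ_L2 : Integrable (fun p : (𝒳 × 𝒴) × (𝒳 × 𝒴) => (ζ p.1.1 p.2.1) ^ 2) (ω.prod ω))
    (hη_L2 : Integrable (fun p : (𝒳 × 𝒴) × (𝒳 × 𝒴) => (η p.1.2 p.2.2) ^ 2) (ω.prod ω)) :
    0 ≤ Tlift ζ η k b ω μZ := by
  -- nonemptiness and nonnegativity of the bounds
  have hne : Nonempty (𝒳 × 𝒴) := by
    by_contra h
    rw [not_nonempty_iff] at h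
    have h1 : (Set.univ : Set (𝒳 × 𝒴)) = ∅ := Set.univ_eq_empty_iff.mpr h
    have h2 := measure_univ (μ := ω)
    rw [h1, measure_empty] at h2
    exact zero_ne_one h2
  obtain ⟨⟨x0, y0⟩⟩ := hne
  have hCζ0 : 0 ≤ Cζ := le_trans (abs_nonneg _) (hζ_bdd x0 x0)
  have hCη0 : 0 ≤ Cη := le_trans (abs_nonneg _) (hη_bdd y0 y0)
  have hCk0 : 0 ≤ Ck := le_trans (abs_nonneg _) (hk_bdd 0)
  have mζ : Measurable fun p : 𝒳 × 𝒳 => ζ p.1 p.2 := hζ_cont.measurable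
  have mη : Measurable fun p : 𝒴 × 𝒴 => η p.1 p.2 := hη_cont.measurable
  have mk : Measurable k := hk_cont.measurable
  -- the combined kernel
  set K : (𝒳 × 𝒴) × ℝ → (𝒳 × 𝒴) × ℝ → ℝ :=
    fun w w' => ζ w.1.1 w'.1.1 * (η w.1.2 w'.1.2 * k ((w.2 - w'.2) / b)) with hK_def
  have hKm : Measurable fun p : ((𝒳 × 𝒴) × ℝ) × ((𝒳 × 𝒴) × ℝ) => K p.1 p.2 := by
    have h1 : Measurable fun p : ((𝒳 × 𝒴) × ℝ) × ((𝒳 × 𝒴) × ℝ) =>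
        (p.1.1.1, p.2.1.1) := (measurable_fst.fst.fst).prodMk (measurable_snd.fst.fst)
    have h2 : Measurable fun p : ((𝒳 × 𝒴) × ℝ) × ((𝒳 × 𝒴) × ℝ) =>
        (p.1.1.2, p.2.1.2) := (measurable_fst.fst.snd).prodMk (measurable_snd.fst.snd)
    have h3 : Measurable fun p : ((𝒳 × 𝒴) × ℝ) × ((𝒳 × 𝒴) × ℝ) =>
        (p.1.2 - p.2.2) / b := (measurable_fst.snd.sub measurable_snd.snd).div_const b
    exact (mζ.comp h1).mul ((mη.comp h2).mul (mk.comp h3))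
  have hKbd : ∀ v w, |K v w| ≤ Cζ * (Cη * Ck) := by
    intro v w
    simp only [hK_def]
    rw [abs_mul, abs_mul]
    refine mul_le_mul (hζ_bdd _ _) ?_ (by positivity) hCζ0
    exact mul_le_mul (hη_bdd _ _) (hk_bdd _) (abs_nonneg _) hCη0
  have hKsym : ∀ v w, K v w = K w v := by
    intro v w
    simp only [hK_def]
    rw [hζ_symm v.1.1 w.1.1, hη_symm v.1.2 w.1.2,
      show (v.2 - w.2) / b = -((w.2 - v.2) / b) by ring, hk_symm]
  have hKpos : ∀ (n : ℕ) (p : Fin n → (𝒳 × 𝒴) × ℝ) (c : Fin n → ℝ),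
      0 ≤ ∑ i, ∑ j, c i * c j * K (p i) (p j) := by
    intro n p c
    have hkmat : ∀ c' : Fin n → ℝ,
        0 ≤ ∑ i, ∑ j, c' i * c' j * k (((p i).2 - (p j).2) / b) := by
      intro c'
      have h := hk_posdef n (fun i => (p i).2 / b) c'
      simpa [div_sub_div_same] using h
    have hkm_symm : ∀ i j : Fin n,
        k (((p i).2 - (p j).2) / b) = k (((p j).2 - (p i).2) / b) := by
      intro i j
      rw [show ((p i).2 - (p j).2) / b = -(((p j).2 - (p i).2) / b) by ring, hk_symm]
    have hstep1 : ∀ c' : Fin n → ℝ, 0 ≤ ∑ i, ∑ j, c' i * c' j *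
        (η (p i).1.2 (p j).1.2 * k (((p i).2 - (p j).2) / b)) := by
      intro c'
      exact schur_quadform _ _ (fun i j => hkm_symm i j)
        (fun c'' => hη_posdef n (fun i => (p i).1.2) c'') hkmat c'
    have h := schur_quadform (fun i j => ζ (p i).1.1 (p j).1.1)
        (fun i j => η (p i).1.2 (p j).1.2 * k (((p i).2 - (p j).2) / b))
        (fun i j => by
          show η (p i).1.2 (p j).1.2 * k (((p i).2 - (p j).2) / b)
            = η (p j).1.2 (p i).1.2 * k (((p j).2 - (p i).2) / b)
          rw [hη_symm ((p i).1.2) ((p j).1.2), hkm_symm i j])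
        (fun c'' => hζ_posdef n (fun i => (p i).1.1) c'') hstep1 c
    exact h
  -- measures
  set π : Measure ((𝒳 × 𝒴) × ℝ) := ω.prod μZ with hπ_def
  set μm : Measure 𝒳 := ω.map Prod.fst with hμm_def
  set νm : Measure 𝒴 := ω.map Prod.snd with hνm_def
  haveI : IsProbabilityMeasure μm := Measure.isProbabilityMeasure_map measurable_fst.aemeasurable
  haveI : IsProbabilityMeasure νm := Measure.isProbabilityMeasure_map measurable_snd.aemeasurable
  set ρ : Measure ((𝒳 × 𝒴) × ℝ) := (μm.prod νm).prod μZ with hρ_def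
  haveI : IsProbabilityMeasure π := by rw [hπ_def]; infer_instance
  haveI : IsProbabilityMeasure ρ := by rw [hρ_def]; infer_instance
  -- the marginal integrals
  set fζ : 𝒳 → ℝ := fun x => ∫ x', ζ x x' ∂μm with hfζ_def
  set fη : 𝒴 → ℝ := fun y => ∫ y', η y y' ∂νm with hfη_def
  set fk : ℝ → ℝ := fun z => ∫ z', k ((z - z') / b) ∂μZ with hfk_def
  have hfζ_sm : StronglyMeasurable fζ :=
    hζ_cont.stronglyMeasurable.integral_prod_right'
  have hfη_sm : StronglyMeasurable fη :=
    hη_cont.stronglyMeasurable.integral_prod_right'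
  have hfk_sm : StronglyMeasurable fk := by
    have hc : Continuous fun p : ℝ × ℝ => k ((p.1 - p.2) / b) :=
      hk_cont.comp ((continuous_fst.sub continuous_snd).div_const b)
    exact hc.stronglyMeasurable.integral_prod_right'
  have hfζ_bd : ∀ x, |fζ x| ≤ Cζ := by
    intro x
    have hb' := norm_integral_le_of_norm_le_const (μ := μm) (f := fun x' => ζ x x') (C := Cζ)
      (Filter.Eventually.of_forall fun x' => by simpa [Real.norm_eq_abs] using hζ_bdd x x')
    rwa [probReal_univ, mul_one, Real.norm_eq_abs] at hb'
  have hfη_bd : ∀ y, |fη y| ≤ Cη := by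
    intro y
    have hb' := norm_integral_le_of_norm_le_const (μ := νm) (f := fun y' => η y y') (C := Cη)
      (Filter.Eventually.of_forall fun y' => by simpa [Real.norm_eq_abs] using hη_bdd y y')
    rwa [probReal_univ, mul_one, Real.norm_eq_abs] at hb'
  have hfk_bd : ∀ z, |fk z| ≤ Ck := by
    intro z
    have hb' := norm_integral_le_of_norm_le_const (μ := μZ)
      (f := fun z' => k ((z - z') / b)) (C := Ck)
      (Filter.Eventually.of_forall fun z' => by simpa [Real.norm_eq_abs] using hk_bdd _)
    rwa [probReal_univ, mul_one, Real.norm_eq_abs] at hb'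
  -- pushforward identities
  have hmapx : π.map (fun w : (𝒳 × 𝒴) × ℝ => w.1.1) = μm := by
    have h1 : (fun w : (𝒳 × 𝒴) × ℝ => w.1.1)
        = (Prod.fst : 𝒳 × 𝒴 → 𝒳) ∘ (Prod.fst : (𝒳 × 𝒴) × ℝ → 𝒳 × 𝒴) := rfl
    rw [h1, ← Measure.map_map measurable_fst measurable_fst, hπ_def,
      Measure.map_fst_prod, measure_univ, one_smul]
  have hmapyz : π.map (fun w : (𝒳 × 𝒴) × ℝ => (w.1.2, w.2)) = νm.prod μZ := by
    have h1 : (fun w : (𝒳 × 𝒴) × ℝ => (w.1.2, w.2))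
        = Prod.map (Prod.snd : 𝒳 × 𝒴 → 𝒴) (id : ℝ → ℝ) := rfl
    rw [h1, hπ_def, ← Measure.map_prod_map _ _ measurable_snd measurable_id,
      Measure.map_id]
  -- pointwise inner-integral identities
  have L1 : ∀ x : 𝒳, ∫ w, ζ x w.1.1 ∂π = fζ x := by
    intro x
    have hg : AEStronglyMeasurable (fun x' => ζ x x')
        (π.map (fun w : (𝒳 × 𝒴) × ℝ => w.1.1)) :=
      ((hζ_cont.comp (Continuous.prodMk_right x)).stronglyMeasurable).aestronglyMeasurable
    show ∫ w, ζ x w.1.1 ∂π = ∫ x', ζ x x' ∂μm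
    rw [← hmapx, integral_map (measurable_fst.fst).aemeasurable hg]
  have L1ω : ∀ x : 𝒳, ∫ q, ζ x q.1 ∂ω = fζ x := by
    intro x
    have hg : AEStronglyMeasurable (fun x' => ζ x x') (ω.map Prod.fst) :=
      ((hζ_cont.comp (Continuous.prodMk_right x)).stronglyMeasurable).aestronglyMeasurable
    show ∫ q, ζ x q.1 ∂ω = ∫ x', ζ x x' ∂μm
    rw [hμm_def, integral_map measurable_fst.aemeasurable hg]
  have L2 : ∀ (y : 𝒴) (z : ℝ), ∫ w, η y w.1.2 * k ((z - w.2) / b) ∂π = fη y * fk z := by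
    intro y z
    have hgc : Continuous fun r : 𝒴 × ℝ => η y r.1 * k ((z - r.2) / b) :=
      (hη_cont.comp (continuous_const.prodMk continuous_fst)).mul
        (hk_cont.comp ((continuous_const.sub continuous_snd).div_const b))
    have e0 : ∫ w, η y w.1.2 * k ((z - w.2) / b) ∂π
        = ∫ r, η y r.1 * k ((z - r.2) / b) ∂(νm.prod μZ) := by
      rw [← hmapyz, integral_map (measurable_fst.snd.prodMk measurable_snd).aemeasurable
        hgc.stronglyMeasurable.aestronglyMeasurable]
    rw [e0]
    have hint : Integrable (fun r : 𝒴 × ℝ => η y r.1 * k ((z - r.2) / b)) (νm.prod μZ) :=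
      integrable_of_bdd hgc.measurable (C := Cη * Ck) (fun r => by
        rw [abs_mul]; exact mul_le_mul (hη_bdd _ _) (hk_bdd _) (abs_nonneg _) hCη0)
    rw [integral_prod _ hint]
    simp only [integral_const_mul, integral_mul_const]; rfl
  have L3 : ∀ w : (𝒳 × 𝒴) × ℝ, ∫ w', K w w' ∂ρ = fζ w.1.1 * (fη w.1.2 * fk w.2) := by
    intro w
    have hKw_cont : Continuous fun w' : (𝒳 × 𝒴) × ℝ => K w w' := by
      show Continuous fun w' : (𝒳 × 𝒴) × ℝ =>
        ζ w.1.1 w'.1.1 * (η w.1.2 w'.1.2 * k ((w.2 - w'.2) / b))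
      exact (hζ_cont.comp (continuous_const.prodMk (continuous_fst.comp continuous_fst))).mul
        ((hη_cont.comp (continuous_const.prodMk (continuous_snd.comp continuous_fst))).mul
          (hk_cont.comp ((continuous_const.sub continuous_snd).div_const b)))
    have hKw_int : Integrable (fun w' => K w w') ρ :=
      integrable_of_bdd hKw_cont.measurable (C := Cζ * (Cη * Ck)) (fun w' => hKbd w w')
    have hIk_bd : |∫ z, fk z ∂μZ| ≤ Ck := by
      have hb' := norm_integral_le_of_norm_le_const (μ := μZ) (f := fk) (C := Ck)
        (Filter.Eventually.of_forall fun z => by simpa [Real.norm_eq_abs] using hfk_bd z)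
      rwa [probReal_univ, mul_one, Real.norm_eq_abs] at hb'
    calc ∫ w', K w w' ∂ρ
        = ∫ p', (∫ z', K w (p', z') ∂μZ) ∂(μm.prod νm) := integral_prod _ hKw_int
      _ = ∫ p', ζ w.1.1 p'.1 * (η w.1.2 p'.2 * fk w.2) ∂(μm.prod νm) := by
          refine integral_congr_ae (Filter.Eventually.of_forall fun p' => ?_)
          show ∫ z', ζ w.1.1 p'.1 * (η w.1.2 p'.2 * k ((w.2 - z') / b)) ∂μZ = _
          simp only [integral_const_mul]; rfl
      _ = fζ w.1.1 * (fη w.1.2 * fk w.2) := by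
          have hint2 : Integrable
              (fun p' : 𝒳 × 𝒴 => ζ w.1.1 p'.1 * (η w.1.2 p'.2 * fk w.2)) (μm.prod νm) := by
            refine integrable_of_bdd ?_ (C := Cζ * (Cη * Ck)) ?_
            · exact (mζ.comp (measurable_const.prodMk measurable_fst)).mul
                ((mη.comp (measurable_const.prodMk measurable_snd)).mul measurable_const)
            · intro p'
              rw [abs_mul, abs_mul]
              exact mul_le_mul (hζ_bdd _ _)
                (mul_le_mul (hη_bdd _ _) (hfk_bd _) (abs_nonneg _) hCη0)
                (by positivity) hCζ0
          rw [integral_prod _ hint2]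
          simp only [integral_const_mul, integral_mul_const]; rfl
  -- integrability of the kernel on the three products
  have hKint_ππ : Integrable
      (fun p : ((𝒳 × 𝒴) × ℝ) × ((𝒳 × 𝒴) × ℝ) => K p.1 p.2) (π.prod π) :=
    integrable_of_bdd hKm (fun p => hKbd _ _)
  have hKint_πρ : Integrable
      (fun p : ((𝒳 × 𝒴) × ℝ) × ((𝒳 × 𝒴) × ℝ) => K p.1 p.2) (π.prod ρ) :=
    integrable_of_bdd hKm (fun p => hKbd _ _)
  have hKint_ρρ : Integrable
      (fun p : ((𝒳 × 𝒴) × ℝ) × ((𝒳 × 𝒴) × ℝ) => K p.1 p.2) (ρ.prod ρ) :=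
    integrable_of_bdd hKm (fun p => hKbd _ _)
  -- Term 1
  have e1 : ∫ w₁, (∫ w₂, ζ w₁.1.1 w₂.1.1 * (η w₁.1.2 w₂.1.2 * k ((w₁.2 - w₂.2) / b)) ∂π) ∂π
      = ∫ p, K p.1 p.2 ∂(π.prod π) := (integral_prod _ hKint_ππ).symm
  -- Term 3
  have e3 : ∫ w₁, (∫ w₂, (∫ w₃,
        ζ w₁.1.1 w₂.1.1 * (η w₁.1.2 w₃.1.2 * k ((w₁.2 - w₃.2) / b)) ∂π) ∂π) ∂π
      = ∫ p, K p.1 p.2 ∂(π.prod ρ) := by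
    have hlhs : ∀ w₁ : (𝒳 × 𝒴) × ℝ,
        (∫ w₂, (∫ w₃, ζ w₁.1.1 w₂.1.1 * (η w₁.1.2 w₃.1.2 * k ((w₁.2 - w₃.2) / b)) ∂π) ∂π)
          = fζ w₁.1.1 * (fη w₁.1.2 * fk w₁.2) := by
      intro w₁
      have hin : ∀ w₂ : (𝒳 × 𝒴) × ℝ,
          (∫ w₃, ζ w₁.1.1 w₂.1.1 * (η w₁.1.2 w₃.1.2 * k ((w₁.2 - w₃.2) / b)) ∂π)
            = ζ w₁.1.1 w₂.1.1 * (fη w₁.1.2 * fk w₁.2) := by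
        intro w₂
        rw [integral_const_mul, L2 w₁.1.2 w₁.2]
      simp only [hin]
      rw [integral_mul_const, L1 w₁.1.1]
    simp only [hlhs]
    rw [integral_prod _ hKint_πρ]
    exact (integral_congr_ae (Filter.Eventually.of_forall fun w₁ => L3 w₁)).symm
  -- Term 2
  have e2 : (∫ p, ζ p.1.1 p.2.1 ∂(ω.prod ω)) *
      (∫ w₁, (∫ w₂, η w₁.1.2 w₂.1.2 * k ((w₁.2 - w₂.2) / b) ∂π) ∂π)
      = ∫ p, K p.1 p.2 ∂(ρ.prod ρ) := by
    have hζωω_int : Integrable (fun p : (𝒳 × 𝒴) × (𝒳 × 𝒴) => ζ p.1.1 p.2.1) (ω.prod ω) := by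
      refine integrable_of_bdd ?_ (C := Cζ) (fun p => hζ_bdd _ _)
      exact mζ.comp ((measurable_fst.fst).prodMk (measurable_snd.fst))
    have hf1 : (∫ p, ζ p.1.1 p.2.1 ∂(ω.prod ω)) = ∫ x, fζ x ∂μm := by
      rw [integral_prod _ hζωω_int]
      have hin : ∀ p1 : 𝒳 × 𝒴, (∫ p2, ζ p1.1 p2.1 ∂ω) = fζ p1.1 := fun p1 => L1ω p1.1
      simp only [hin]
      rw [hμm_def, integral_map measurable_fst.aemeasurable hfζ_sm.aestronglyMeasurable]
    have hf2 : (∫ w₁, (∫ w₂, η w₁.1.2 w₂.1.2 * k ((w₁.2 - w₂.2) / b) ∂π) ∂π)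
        = (∫ y, fη y ∂νm) * (∫ z, fk z ∂μZ) := by
      have hin : ∀ w₁ : (𝒳 × 𝒴) × ℝ,
          (∫ w₂, η w₁.1.2 w₂.1.2 * k ((w₁.2 - w₂.2) / b) ∂π) = fη w₁.1.2 * fk w₁.2 :=
        fun w₁ => L2 w₁.1.2 w₁.2
      simp only [hin]
      have hgm : Measurable fun q : 𝒴 × ℝ => fη q.1 * fk q.2 :=
        (hfη_sm.measurable.comp measurable_fst).mul (hfk_sm.measurable.comp measurable_snd)
      have e0 : ∫ w₁, fη w₁.1.2 * fk w₁.2 ∂π = ∫ q, fη q.1 * fk q.2 ∂(νm.prod μZ) := by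
        rw [← hmapyz, integral_map (measurable_fst.snd.prodMk measurable_snd).aemeasurable
          hgm.aestronglyMeasurable]
      rw [e0]
      have hint : Integrable (fun q : 𝒴 × ℝ => fη q.1 * fk q.2) (νm.prod μZ) := by
        refine integrable_of_bdd hgm (C := Cη * Ck) (fun q => ?_)
        rw [abs_mul]
        exact mul_le_mul (hfη_bd _) (hfk_bd _) (abs_nonneg _) hCη0
      rw [integral_prod _ hint]
      simp only [integral_const_mul, integral_mul_const]
    have hIk_bd : |∫ z, fk z ∂μZ| ≤ Ck := by
      have hb' := norm_integral_le_of_norm_le_const (μ := μZ) (f := fk) (C := Ck)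
        (Filter.Eventually.of_forall fun z => by simpa [Real.norm_eq_abs] using hfk_bd z)
      rwa [probReal_univ, mul_one, Real.norm_eq_abs] at hb'
    have hrhs : ∫ p, K p.1 p.2 ∂(ρ.prod ρ)
        = (∫ x, fζ x ∂μm) * ((∫ y, fη y ∂νm) * (∫ z, fk z ∂μZ)) := by
      rw [integral_prod _ hKint_ρρ]
      simp only [L3]
      have hgm2 : Measurable fun w : (𝒳 × 𝒴) × ℝ => fζ w.1.1 * (fη w.1.2 * fk w.2) :=
        (hfζ_sm.measurable.comp measurable_fst.fst).mul
          ((hfη_sm.measurable.comp measurable_fst.snd).mul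
            (hfk_sm.measurable.comp measurable_snd))
      have hint2 : Integrable (fun w : (𝒳 × 𝒴) × ℝ =>
          fζ w.1.1 * (fη w.1.2 * fk w.2)) ρ := by
        refine integrable_of_bdd hgm2 (C := Cζ * (Cη * Ck)) (fun w => ?_)
        rw [abs_mul, abs_mul]
        exact mul_le_mul (hfζ_bd _) (mul_le_mul (hfη_bd _) (hfk_bd _) (abs_nonneg _) hCη0)
          (by positivity) hCζ0
      calc ∫ w, fζ w.1.1 * (fη w.1.2 * fk w.2) ∂ρ
          = ∫ p', (∫ z, fζ p'.1 * (fη p'.2 * fk z) ∂μZ) ∂(μm.prod νm) :=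
            integral_prod _ hint2
        _ = (∫ x, fζ x ∂μm) * ((∫ y, fη y ∂νm) * (∫ z, fk z ∂μZ)) := by
            simp only [integral_const_mul]
            have hint3 : Integrable (fun p' : 𝒳 × 𝒴 =>
                fζ p'.1 * (fη p'.2 * ∫ z, fk z ∂μZ)) (μm.prod νm) := by
              refine integrable_of_bdd ?_ (C := Cζ * (Cη * Ck)) ?_
              · exact (hfζ_sm.measurable.comp measurable_fst).mul
                  ((hfη_sm.measurable.comp measurable_snd).mul measurable_const)
              · intro p'
                rw [abs_mul, abs_mul]
                exact mul_le_mul (hfζ_bd _)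
                  (mul_le_mul (hfη_bd _) hIk_bd (abs_nonneg _) hCη0)
                  (by positivity) hCζ0
            rw [integral_prod _ hint3]
            simp only [integral_const_mul, integral_mul_const]
    rw [hf1, hf2, hrhs]
  -- Final assembly
  have key := mmd_nonneg K hKm (Cζ * (Cη * Ck)) hKbd hKsym hKpos π ρ
  have hgoal : Tlift ζ η k b ω μZ
      = (∫ p, K p.1 p.2 ∂(π.prod π)) + (∫ p, K p.1 p.2 ∂(ρ.prod ρ))
        - 2 * ∫ p, K p.1 p.2 ∂(π.prod ρ) := by
    unfold Tlift
    rw [← hπ_def, e1, e2, e3]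
  rw [hgoal]
  exact key
end
end

section
/- Under the null hypothesis (ω = μ ⊗ ν and Z independent of (X,Y), so that X is independent of (Y,Z)), and assuming k is bounded, E[ζ(X₁,X₂)²] < ∞ and E[η(Y₁,Y₂)²] < ∞, the symmetrized U-statistic kernel is first-order degenerate: E[h̄_b(W₁,W₂,W₃,W₄) | W₁] = 0 almost surely. -/
open MeasureTheory

noncomputable section

/-- The (non-symmetric) U-statistic kernel `h_b` of the random-lifter method, as a function
of four triples `wᵢ = (xᵢ, yᵢ, zᵢ)`. -/
def hbKer {𝒳 𝒴 : Type*} (ζ : 𝒳 → 𝒳 → ℝ) (η : 𝒴 → 𝒴 → ℝ) (k : ℝ → ℝ) (b : ℝ)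
    (w₁ w₂ w₃ w₄ : (𝒳 × 𝒴) × ℝ) : ℝ :=
  (1 / 4) *
    (ζ w₁.1.1 w₂.1.1 + ζ w₃.1.1 w₄.1.1 - ζ w₁.1.1 w₃.1.1 - ζ w₂.1.1 w₄.1.1) *
    (η w₁.1.2 w₂.1.2 * k ((w₁.2 - w₂.2) / b) + η w₃.1.2 w₄.1.2 * k ((w₃.2 - w₄.2) / b)
      - η w₁.1.2 w₃.1.2 * k ((w₁.2 - w₃.2) / b) - η w₂.1.2 w₄.1.2 * k ((w₂.2 - w₄.2) / b))

/-- The symmetrized U-statistic kernel `h̄_b`. -/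
def hbBar {𝒳 𝒴 : Type*} (ζ : 𝒳 → 𝒳 → ℝ) (η : 𝒴 → 𝒴 → ℝ) (k : ℝ → ℝ) (b : ℝ)
    (w₁ w₂ w₃ w₄ : (𝒳 × 𝒴) × ℝ) : ℝ :=
  (1 / 3) * (hbKer ζ η k b w₁ w₂ w₃ w₄ + hbKer ζ η k b w₃ w₂ w₁ w₄
    + hbKer ζ η k b w₁ w₂ w₄ w₃)

section Helpers

variable {α β γ δ : Type*} [MeasurableSpace α] [MeasurableSpace β] [MeasurableSpace γ]
  [MeasurableSpace δ]

private theorem mp_congr {μ : Measure α} {ν : Measure β} {f g : α → β}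
    (h : MeasurePreserving f μ ν) (e : ∀ x, g x = f x) : MeasurePreserving g μ ν := by
  have hgf : g = f := funext e
  rw [hgf]; exact h

private theorem mp_fst (μ : Measure α) (ν : Measure β) [SFinite μ] [IsProbabilityMeasure ν] :
    MeasurePreserving Prod.fst (μ.prod ν) μ :=
  ⟨measurable_fst, by simp⟩

private theorem mp_snd (μ : Measure α) (ν : Measure β) [IsProbabilityMeasure μ] [SFinite ν] :
    MeasurePreserving Prod.snd (μ.prod ν) ν :=
  ⟨measurable_snd, by simp⟩

private theorem mp_pm {μa : Measure α} {μb : Measure β} {μc : Measure γ} {μd : Measure δ}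
    [SFinite μa] [SFinite μc] {f : α → β} {g : γ → δ}
    (hf : MeasurePreserving f μa μb) (hg : MeasurePreserving g μc μd) :
    MeasurePreserving (fun p : α × γ => (f p.1, g p.2)) (μa.prod μc) (μb.prod μd) :=
  mp_congr (hf.prod hg) (fun p => by cases p; rfl)

private theorem mp_swap (μa : Measure α) (μb : Measure β) [SFinite μa] [SFinite μb] :
    MeasurePreserving (fun p : α × β => (p.2, p.1)) (μa.prod μb) (μb.prod μa) :=
  mp_congr Measure.measurePreserving_swap (fun _ => rfl)

private theorem mp_assoc (μa : Measure α) (μb : Measure β) (μc : Measure γ)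
    [SFinite μb] [SFinite μc] :
    MeasurePreserving (fun p : (α × β) × γ => (p.1.1, (p.1.2, p.2)))
      ((μa.prod μb).prod μc) (μa.prod (μb.prod μc)) :=
  mp_congr (measurePreserving_prodAssoc μa μb μc) (fun _ => rfl)

private theorem mp_assoc' (μa : Measure α) (μb : Measure β) (μc : Measure γ)
    [SFinite μb] [SFinite μc] :
    MeasurePreserving (fun p : α × (β × γ) => ((p.1, p.2.1), p.2.2))
      (μa.prod (μb.prod μc)) ((μa.prod μb).prod μc) :=
  mp_congr (MeasurePreserving.symm MeasurableEquiv.prodAssoc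
    (measurePreserving_prodAssoc μa μb μc)) (fun _ => rfl)

private theorem mp_interchange (μa : Measure α) (μb : Measure β) (μc : Measure γ)
    (μd : Measure δ) [SFinite μa] [SFinite μb] [SFinite μc] [SFinite μd] :
    MeasurePreserving (fun p : (α × β) × (γ × δ) => ((p.1.1, p.2.1), (p.1.2, p.2.2)))
      ((μa.prod μb).prod (μc.prod μd)) ((μa.prod μc).prod (μb.prod μd)) := by
  have h1 := mp_assoc μa μb (μc.prod μd)
  have h2 := mp_pm (MeasurePreserving.id μa) (mp_assoc' μb μc μd)
  have h3 := mp_pm (MeasurePreserving.id μa) (mp_pm (mp_swap μb μc) (MeasurePreserving.id μd))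
  have h4 := mp_pm (MeasurePreserving.id μa) (mp_assoc μc μb μd)
  have h5 := mp_assoc' μa μc (μb.prod μd)
  exact mp_congr ((((h5.comp h4).comp h3).comp h2).comp h1) (fun _ => rfl)

private theorem mp_s1 (μ : Measure α) [SFinite μ] :
    MeasurePreserving (fun x : α × α × α => (x.2.1, (x.1, x.2.2)))
      (μ.prod (μ.prod μ)) (μ.prod (μ.prod μ)) :=
  mp_congr ((mp_assoc μ μ μ).comp
    ((mp_pm (mp_swap μ μ) (MeasurePreserving.id μ)).comp (mp_assoc' μ μ μ))) (fun _ => rfl)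

private theorem mp_s2 (μ : Measure α) [SFinite μ] :
    MeasurePreserving (fun x : α × α × α => (x.1, (x.2.2, x.2.1)))
      (μ.prod (μ.prod μ)) (μ.prod (μ.prod μ)) :=
  mp_pm (MeasurePreserving.id μ) (mp_swap μ μ)

private theorem mp_s3 (μ : Measure α) [SFinite μ] :
    MeasurePreserving (fun x : α × α × α => (x.2.2, (x.2.1, x.1)))
      (μ.prod (μ.prod μ)) (μ.prod (μ.prod μ)) :=
  mp_congr ((mp_pm (MeasurePreserving.id μ) (mp_swap μ μ)).comp
    ((mp_s1 μ).comp (mp_pm (MeasurePreserving.id μ) (mp_swap μ μ)))) (fun _ => rfl)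

private theorem integral_zero_of_flip {μ : Measure α} {f : α → ℝ} {s : α → α}
    (hs : MeasurePreserving s μ μ) (hf : AEStronglyMeasurable f μ)
    (hneg : ∀ x, f (s x) = -f x) : ∫ x, f x ∂μ = 0 := by
  have h1 : ∫ x, f x ∂μ = ∫ x, f (s x) ∂μ := by
    nth_rewrite 1 [← hs.map_eq]
    exact integral_map hs.measurable.aemeasurable (by rwa [hs.map_eq])
  have h2 : ∫ x, f (s x) ∂μ = -∫ x, f x ∂μ := by
    simp only [hneg, integral_neg]
  linarith

private theorem int_comp {μ : Measure α} {ν : Measure β} {f : α → β}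
    (hf : MeasurePreserving f μ ν) {g : β → ℝ} (hg : Measurable g) (hi : Integrable g ν) :
    Integrable (fun x => g (f x)) μ :=
  (hf.integrable_comp hg.aestronglyMeasurable).2 hi

private theorem meas_z {𝒳 : Type*} [MeasurableSpace 𝒳] {ζ : 𝒳 → 𝒳 → ℝ}
    (hζ : Measurable fun p : 𝒳 × 𝒳 => ζ p.1 p.2) {f g : δ → 𝒳}
    (hf : Measurable f) (hg : Measurable g) :
    Measurable fun d => ζ (f d) (g d) := hζ.comp (hf.prodMk hg)

private theorem meas_g {𝒴 : Type*} [MeasurableSpace 𝒴] {η : 𝒴 → 𝒴 → ℝ} {k : ℝ → ℝ} {b : ℝ}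
    (hη : Measurable fun p : 𝒴 × 𝒴 => η p.1 p.2) (hk : Measurable k)
    {f g : δ → 𝒴 × ℝ} (hf : Measurable f) (hg : Measurable g) :
    Measurable fun d => η (f d).1 (g d).1 * k (((f d).2 - (g d).2) / b) :=
  (hη.comp (hf.fst.prodMk hg.fst)).mul (hk.comp ((hf.snd.sub hg.snd).div_const b))

private theorem int_g {𝒴 : Type*} [MeasurableSpace 𝒴] {L : Measure δ}
    {η : 𝒴 → 𝒴 → ℝ} {k : ℝ → ℝ} {b Ck : ℝ}
    (hη : Measurable fun p : 𝒴 × 𝒴 => η p.1 p.2) (hk : Measurable k)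
    (hbdd : ∀ u, |k u| ≤ Ck) {f g : δ → 𝒴 × ℝ}
    (hf : Measurable f) (hg : Measurable g)
    (hi : Integrable (fun d => η (f d).1 (g d).1) L) :
    Integrable (fun d => η (f d).1 (g d).1 * k (((f d).2 - (g d).2) / b)) L := by
  refine (hi.abs.mul_const Ck).mono' (meas_g hη hk hf hg).aestronglyMeasurable
    (ae_of_all _ fun d => ?_)
  rw [Real.norm_eq_abs, abs_mul]
  exact mul_le_mul_of_nonneg_left (hbdd _) (abs_nonneg _)

/-- Main work for a single (permuted) kernel term: it is integrable on the triple product,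
and its integral vanishes. -/
private theorem term_main {𝒳 𝒴 : Type*} [MeasurableSpace 𝒳] [MeasurableSpace 𝒴]
    (μ : Measure 𝒳) [IsProbabilityMeasure μ] (ν : Measure 𝒴) [IsProbabilityMeasure ν]
    (μZ : Measure ℝ) [IsProbabilityMeasure μZ]
    (F : ((𝒳 × 𝒴) × ℝ) × (((𝒳 × 𝒴) × ℝ) × ((𝒳 × 𝒴) × ℝ)) → ℝ)
    (A : 𝒳 × 𝒳 × 𝒳 → ℝ) (B : (𝒴 × ℝ) × (𝒴 × ℝ) × (𝒴 × ℝ) → ℝ)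
    (hA : Measurable A) (hB : Measurable B)
    (hAi : Integrable A (μ.prod (μ.prod μ)))
    (hBi : Integrable B ((ν.prod μZ).prod ((ν.prod μZ).prod (ν.prod μZ))))
    (s : 𝒳 × 𝒳 × 𝒳 → 𝒳 × 𝒳 × 𝒳)
    (hs : MeasurePreserving s (μ.prod (μ.prod μ)) (μ.prod (μ.prod μ)))
    (hflip : ∀ x, A (s x) = -A x)
    (hF : F = fun q => (1 / 4 * A (q.1.1.1, (q.2.1.1.1, q.2.2.1.1)))
        * B ((q.1.1.2, q.1.2), ((q.2.1.1.2, q.2.1.2), (q.2.2.1.2, q.2.2.2)))) :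
    Integrable F
      (((μ.prod ν).prod μZ).prod ((((μ.prod ν).prod μZ).prod ((μ.prod ν).prod μZ)))) ∧
    ∫ q, F q
        ∂(((μ.prod ν).prod μZ).prod ((((μ.prod ν).prod μZ).prod ((μ.prod ν).prod μZ))))
      = 0 := by
  have mpφ : MeasurePreserving (fun w : (𝒳 × 𝒴) × ℝ => (w.1.1, (w.1.2, w.2)))
      ((μ.prod ν).prod μZ) (μ.prod (ν.prod μZ)) := mp_assoc μ ν μZ
  have mpE : MeasurePreserving
      (fun q : ((𝒳 × 𝒴) × ℝ) × (((𝒳 × 𝒴) × ℝ) × ((𝒳 × 𝒴) × ℝ)) =>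
        ((q.1.1.1, (q.2.1.1.1, q.2.2.1.1)),
          ((q.1.1.2, q.1.2), ((q.2.1.1.2, q.2.1.2), (q.2.2.1.2, q.2.2.2)))))
      (((μ.prod ν).prod μZ).prod ((((μ.prod ν).prod μZ).prod ((μ.prod ν).prod μZ))))
      ((μ.prod (μ.prod μ)).prod ((ν.prod μZ).prod ((ν.prod μZ).prod (ν.prod μZ)))) :=
    mp_congr ((mp_interchange μ (ν.prod μZ) (μ.prod μ) ((ν.prod μZ).prod (ν.prod μZ))).comp
      ((mp_pm (MeasurePreserving.id _) (mp_interchange μ (ν.prod μZ) μ (ν.prod μZ))).comp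
        (mp_pm mpφ (mp_pm mpφ mpφ)))) (fun _ => rfl)
  have hG : Measurable fun p : (𝒳 × 𝒳 × 𝒳) × ((𝒴 × ℝ) × (𝒴 × ℝ) × (𝒴 × ℝ)) =>
      (1 / 4 * A p.1) * B p.2 :=
    ((hA.comp measurable_fst).const_mul _).mul (hB.comp measurable_snd)
  have hGi : Integrable (fun p : (𝒳 × 𝒳 × 𝒳) × ((𝒴 × ℝ) × (𝒴 × ℝ) × (𝒴 × ℝ)) =>
      (1 / 4 * A p.1) * B p.2)
      ((μ.prod (μ.prod μ)).prod ((ν.prod μZ).prod ((ν.prod μZ).prod (ν.prod μZ)))) :=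
    (hAi.const_mul _).mul_prod hBi
  constructor
  · rw [hF]
    exact (mpE.integrable_comp hG.aestronglyMeasurable).2 hGi
  · rw [hF]
    have h1 : (∫ q, (1 / 4 * A (q.1.1.1, (q.2.1.1.1, q.2.2.1.1)))
          * B ((q.1.1.2, q.1.2), ((q.2.1.1.2, q.2.1.2), (q.2.2.1.2, q.2.2.2)))
          ∂(((μ.prod ν).prod μZ).prod ((((μ.prod ν).prod μZ).prod ((μ.prod ν).prod μZ)))))
        = ∫ p, (1 / 4 * A p.1) * B p.2
          ∂((μ.prod (μ.prod μ)).prod ((ν.prod μZ).prod ((ν.prod μZ).prod (ν.prod μZ)))) := by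
      rw [← mpE.map_eq]
      exact (integral_map mpE.measurable.aemeasurable hG.aestronglyMeasurable).symm
    have h2 : (∫ p, (1 / 4 * A p.1) * B p.2
          ∂((μ.prod (μ.prod μ)).prod ((ν.prod μZ).prod ((ν.prod μZ).prod (ν.prod μZ)))))
        = (∫ xs, 1 / 4 * A xs ∂(μ.prod (μ.prod μ)))
          * ∫ vs, B vs ∂((ν.prod μZ).prod ((ν.prod μZ).prod (ν.prod μZ))) :=
      integral_prod_mul (fun xs => 1 / 4 * A xs) B
    have h3 : (∫ xs, 1 / 4 * A xs ∂(μ.prod (μ.prod μ)))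
        = 1 / 4 * ∫ xs, A xs ∂(μ.prod (μ.prod μ)) := integral_const_mul _ _
    rw [h1, h2, h3, integral_zero_of_flip hs hA.aestronglyMeasurable hflip]
    ring

end Helpers

set_option maxHeartbeats 1000000 in
/-- Under the null hypothesis (`ω = μ ⊗ ν`, and `Z` independent of `(X,Y)`
so that the i.i.d. triples have law `ρ = (μ ⊗ ν) ⊗ μZ`), with `k` bounded and `ζ, η` with
finite second moments, the symmetrized kernel is first-order degenerate:
`E[h̄_b(W₁,W₂,W₃,W₄) | W₁] = 0` almost surely. -/
theorem statement5 {𝒳 𝒴 : Type*} [MeasurableSpace 𝒳] [MeasurableSpace 𝒴]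
    (ζ : 𝒳 → 𝒳 → ℝ) (η : 𝒴 → 𝒴 → ℝ) (k : ℝ → ℝ) (b : ℝ) (hb : 0 < b)
    (hζ_meas : Measurable fun p : 𝒳 × 𝒳 => ζ p.1 p.2)
    (hη_meas : Measurable fun p : 𝒴 × 𝒴 => η p.1 p.2)
    (hζ_symm : ∀ x x', ζ x x' = ζ x' x)
    (hη_symm : ∀ y y', η y y' = η y' y)
    (hk_meas : Measurable k)
    (Ck : ℝ) (hk_bdd : ∀ u, |k u| ≤ Ck)
    (hk_nonneg : ∀ u, 0 ≤ k u) (hk_int : ∫ u, k u = 1)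
    (hk_symm : ∀ u, k (-u) = k u)
    -- null hypothesis: the joint law of (X,Y) is the product of its marginals,
    -- and Z is independent of (X,Y), so the triples have law ρ = (μ ⊗ ν) ⊗ μZ
    (μ : Measure 𝒳) [IsProbabilityMeasure μ]
    (ν : Measure 𝒴) [IsProbabilityMeasure ν]
    (μZ : Measure ℝ) [IsProbabilityMeasure μZ]
    -- finite second moments
    (hζ_L2 : Integrable (fun p : 𝒳 × 𝒳 => (ζ p.1 p.2) ^ 2) (μ.prod μ))
    (hη_L2 : Integrable (fun p : 𝒴 × 𝒴 => (η p.1 p.2) ^ 2) (ν.prod ν)) :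
    ∀ᵐ w₁ ∂((μ.prod ν).prod μZ),
      (∫ w₂, (∫ w₃, (∫ w₄, hbBar ζ η k b w₁ w₂ w₃ w₄
          ∂((μ.prod ν).prod μZ)) ∂((μ.prod ν).prod μZ)) ∂((μ.prod ν).prod μZ)) = 0 := by
  have hζ_L1 : Integrable (fun p : 𝒳 × 𝒳 => ζ p.1 p.2) (μ.prod μ) :=
    ((memLp_two_iff_integrable_sq hζ_meas.aestronglyMeasurable).2 hζ_L2).integrable one_le_two
  have hη_L1 : Integrable (fun p : 𝒴 × 𝒴 => η p.1 p.2) (ν.prod ν) :=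
    ((memLp_two_iff_integrable_sq hη_meas.aestronglyMeasurable).2 hη_L2).integrable one_le_two
  have mpx1 : MeasurePreserving (fun w : (𝒳 × 𝒴) × ℝ => w.1.1) ((μ.prod ν).prod μZ) μ :=
    (mp_fst μ ν).comp (mp_fst (μ.prod ν) μZ)
  have mpy1 : MeasurePreserving (fun w : (𝒳 × 𝒴) × ℝ => w.1.2) ((μ.prod ν).prod μZ) ν :=
    (mp_snd μ ν).comp (mp_fst (μ.prod ν) μZ)
  have hx1ae : ∀ᵐ w ∂((μ.prod ν).prod μZ), Integrable (fun x' => ζ w.1.1 x') μ :=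
    mpx1.quasiMeasurePreserving.ae hζ_L1.prod_right_ae
  have hy1ae : ∀ᵐ w ∂((μ.prod ν).prod μZ), Integrable (fun y' => η w.1.2 y') ν :=
    mpy1.quasiMeasurePreserving.ae hη_L1.prod_right_ae
  filter_upwards [hx1ae, hy1ae] with w₁ hζ1 hη1
  obtain ⟨⟨x₁, y₁⟩, z₁⟩ := w₁
  have hζ1c : Integrable (fun x' => ζ x₁ x') μ := hζ1
  have hη1c : Integrable (fun y' => η y₁ y') ν := hη1
  have hζc : Measurable fun x => ζ x₁ x := hζ_meas.comp (measurable_const.prodMk measurable_id)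
  have hζc' : Measurable fun x => ζ x x₁ := hζ_meas.comp (measurable_id.prodMk measurable_const)
  have hηc : Measurable fun y => η y₁ y := hη_meas.comp (measurable_const.prodMk measurable_id)
  have hηc' : Measurable fun y => η y y₁ := hη_meas.comp (measurable_id.prodMk measurable_const)
  have hζ1' : Integrable (fun x' => ζ x' x₁) μ :=
    hζ1c.congr (ae_of_all _ fun x => hζ_symm x₁ x)
  have hη1' : Integrable (fun y' => η y' y₁) ν :=
    hη1c.congr (ae_of_all _ fun y => hη_symm y₁ y)
  -- measure-preserving projections from the x-triple space
  have mpX1 : MeasurePreserving (fun xs : 𝒳 × 𝒳 × 𝒳 => xs.1) (μ.prod (μ.prod μ)) μ :=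
    mp_fst μ (μ.prod μ)
  have mpX23 : MeasurePreserving (fun xs : 𝒳 × 𝒳 × 𝒳 => xs.2)
      (μ.prod (μ.prod μ)) (μ.prod μ) := mp_snd μ (μ.prod μ)
  have mpX2 : MeasurePreserving (fun xs : 𝒳 × 𝒳 × 𝒳 => xs.2.1) (μ.prod (μ.prod μ)) μ :=
    (mp_fst μ μ).comp mpX23
  have mpX3 : MeasurePreserving (fun xs : 𝒳 × 𝒳 × 𝒳 => xs.2.2) (μ.prod (μ.prod μ)) μ :=
    (mp_snd μ μ).comp mpX23
  have mpX12 : MeasurePreserving (fun xs : 𝒳 × 𝒳 × 𝒳 => (xs.1, xs.2.1))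
      (μ.prod (μ.prod μ)) (μ.prod μ) := mp_pm (MeasurePreserving.id μ) (mp_fst μ μ)
  have mpX13 : MeasurePreserving (fun xs : 𝒳 × 𝒳 × 𝒳 => (xs.1, xs.2.2))
      (μ.prod (μ.prod μ)) (μ.prod μ) := mp_pm (MeasurePreserving.id μ) (mp_snd μ μ)
  have mpX21 : MeasurePreserving (fun xs : 𝒳 × 𝒳 × 𝒳 => (xs.2.1, xs.1))
      (μ.prod (μ.prod μ)) (μ.prod μ) := (mp_swap μ μ).comp mpX12
  have mpX32 : MeasurePreserving (fun xs : 𝒳 × 𝒳 × 𝒳 => (xs.2.2, xs.2.1))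
      (μ.prod (μ.prod μ)) (μ.prod μ) := (mp_swap μ μ).comp mpX23
  -- measure-preserving projections from the (y,z)-triple space
  have mpV1 : MeasurePreserving (fun vs : (𝒴 × ℝ) × (𝒴 × ℝ) × (𝒴 × ℝ) => vs.1)
      ((ν.prod μZ).prod ((ν.prod μZ).prod (ν.prod μZ))) (ν.prod μZ) :=
    mp_fst (ν.prod μZ) ((ν.prod μZ).prod (ν.prod μZ))
  have mpV23 : MeasurePreserving (fun vs : (𝒴 × ℝ) × (𝒴 × ℝ) × (𝒴 × ℝ) => vs.2)
      ((ν.prod μZ).prod ((ν.prod μZ).prod (ν.prod μZ))) ((ν.prod μZ).prod (ν.prod μZ)) :=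
    mp_snd (ν.prod μZ) ((ν.prod μZ).prod (ν.prod μZ))
  have mpV2 : MeasurePreserving (fun vs : (𝒴 × ℝ) × (𝒴 × ℝ) × (𝒴 × ℝ) => vs.2.1)
      ((ν.prod μZ).prod ((ν.prod μZ).prod (ν.prod μZ))) (ν.prod μZ) :=
    (mp_fst (ν.prod μZ) (ν.prod μZ)).comp mpV23
  have mpV3 : MeasurePreserving (fun vs : (𝒴 × ℝ) × (𝒴 × ℝ) × (𝒴 × ℝ) => vs.2.2)
      ((ν.prod μZ).prod ((ν.prod μZ).prod (ν.prod μZ))) (ν.prod μZ) :=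
    (mp_snd (ν.prod μZ) (ν.prod μZ)).comp mpV23
  have mpV12 : MeasurePreserving (fun vs : (𝒴 × ℝ) × (𝒴 × ℝ) × (𝒴 × ℝ) => (vs.1, vs.2.1))
      ((ν.prod μZ).prod ((ν.prod μZ).prod (ν.prod μZ))) ((ν.prod μZ).prod (ν.prod μZ)) :=
    mp_pm (MeasurePreserving.id (ν.prod μZ)) (mp_fst (ν.prod μZ) (ν.prod μZ))
  have mpV13 : MeasurePreserving (fun vs : (𝒴 × ℝ) × (𝒴 × ℝ) × (𝒴 × ℝ) => (vs.1, vs.2.2))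
      ((ν.prod μZ).prod ((ν.prod μZ).prod (ν.prod μZ))) ((ν.prod μZ).prod (ν.prod μZ)) :=
    mp_pm (MeasurePreserving.id (ν.prod μZ)) (mp_snd (ν.prod μZ) (ν.prod μZ))
  have mpV21 : MeasurePreserving (fun vs : (𝒴 × ℝ) × (𝒴 × ℝ) × (𝒴 × ℝ) => (vs.2.1, vs.1))
      ((ν.prod μZ).prod ((ν.prod μZ).prod (ν.prod μZ))) ((ν.prod μZ).prod (ν.prod μZ)) :=
    (mp_swap (ν.prod μZ) (ν.prod μZ)).comp mpV12
  have mpV32 : MeasurePreserving (fun vs : (𝒴 × ℝ) × (𝒴 × ℝ) × (𝒴 × ℝ) => (vs.2.2, vs.2.1))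
      ((ν.prod μZ).prod ((ν.prod μZ).prod (ν.prod μZ))) ((ν.prod μZ).prod (ν.prod μZ)) :=
    (mp_swap (ν.prod μZ) (ν.prod μZ)).comp mpV23
  have mpVy : MeasurePreserving (fun v : 𝒴 × ℝ => v.1) (ν.prod μZ) ν := mp_fst ν μZ
  have hηpm : Measurable (fun p : (𝒴 × ℝ) × (𝒴 × ℝ) => η p.1.1 p.2.1) :=
    hη_meas.comp (measurable_fst.fst.prodMk measurable_snd.fst)
  have hηpair : Integrable (fun p : (𝒴 × ℝ) × (𝒴 × ℝ) => η p.1.1 p.2.1)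
      ((ν.prod μZ).prod (ν.prod μZ)) :=
    int_comp (mp_pm mpVy mpVy) hη_meas hη_L1
  -- integrable ζ pieces
  have a12 : Integrable (fun xs : 𝒳 × 𝒳 × 𝒳 => ζ x₁ xs.1) (μ.prod (μ.prod μ)) :=
    int_comp mpX1 hζc hζ1c
  have a34 : Integrable (fun xs : 𝒳 × 𝒳 × 𝒳 => ζ xs.2.1 xs.2.2) (μ.prod (μ.prod μ)) :=
    int_comp mpX23 hζ_meas hζ_L1
  have a13 : Integrable (fun xs : 𝒳 × 𝒳 × 𝒳 => ζ x₁ xs.2.1) (μ.prod (μ.prod μ)) :=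
    int_comp mpX2 hζc hζ1c
  have a24 : Integrable (fun xs : 𝒳 × 𝒳 × 𝒳 => ζ xs.1 xs.2.2) (μ.prod (μ.prod μ)) :=
    int_comp mpX13 hζ_meas hζ_L1
  have a21 : Integrable (fun xs : 𝒳 × 𝒳 × 𝒳 => ζ xs.2.1 xs.1) (μ.prod (μ.prod μ)) :=
    int_comp mpX21 hζ_meas hζ_L1
  have a14 : Integrable (fun xs : 𝒳 × 𝒳 × 𝒳 => ζ x₁ xs.2.2) (μ.prod (μ.prod μ)) :=
    int_comp mpX3 hζc hζ1c
  have a21' : Integrable (fun xs : 𝒳 × 𝒳 × 𝒳 => ζ xs.2.1 x₁) (μ.prod (μ.prod μ)) :=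
    int_comp mpX2 hζc' hζ1'
  have a43 : Integrable (fun xs : 𝒳 × 𝒳 × 𝒳 => ζ xs.2.2 xs.2.1) (μ.prod (μ.prod μ)) :=
    int_comp mpX32 hζ_meas hζ_L1
  have a23 : Integrable (fun xs : 𝒳 × 𝒳 × 𝒳 => ζ xs.1 xs.2.1) (μ.prod (μ.prod μ)) :=
    int_comp mpX12 hζ_meas hζ_L1
  -- integrable A blocks
  have iA1 : Integrable (fun xs : 𝒳 × 𝒳 × 𝒳 =>
      ζ x₁ xs.1 + ζ xs.2.1 xs.2.2 - ζ x₁ xs.2.1 - ζ xs.1 xs.2.2) (μ.prod (μ.prod μ)) :=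
    ((a12.add a34).sub a13).sub a24
  have iA2 : Integrable (fun xs : 𝒳 × 𝒳 × 𝒳 =>
      ζ xs.2.1 xs.1 + ζ x₁ xs.2.2 - ζ xs.2.1 x₁ - ζ xs.1 xs.2.2) (μ.prod (μ.prod μ)) :=
    ((a21.add a14).sub a21').sub a24
  have iA3 : Integrable (fun xs : 𝒳 × 𝒳 × 𝒳 =>
      ζ x₁ xs.1 + ζ xs.2.2 xs.2.1 - ζ x₁ xs.2.2 - ζ xs.1 xs.2.1) (μ.prod (μ.prod μ)) :=
    ((a12.add a43).sub a14).sub a23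
  -- integrable B pieces
  have b12 : Integrable (fun vs : (𝒴 × ℝ) × (𝒴 × ℝ) × (𝒴 × ℝ) =>
      η y₁ vs.1.1 * k ((z₁ - vs.1.2) / b))
      ((ν.prod μZ).prod ((ν.prod μZ).prod (ν.prod μZ))) :=
    int_g (δ := (𝒴 × ℝ) × (𝒴 × ℝ) × (𝒴 × ℝ)) (f := fun _ => ((y₁, z₁) : 𝒴 × ℝ)) (g := fun vs => vs.1) hη_meas hk_meas hk_bdd
      measurable_const measurable_fst (int_comp (mpVy.comp mpV1) hηc hη1c)
  have b34 : Integrable (fun vs : (𝒴 × ℝ) × (𝒴 × ℝ) × (𝒴 × ℝ) =>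
      η vs.2.1.1 vs.2.2.1 * k ((vs.2.1.2 - vs.2.2.2) / b))
      ((ν.prod μZ).prod ((ν.prod μZ).prod (ν.prod μZ))) :=
    int_g (δ := (𝒴 × ℝ) × (𝒴 × ℝ) × (𝒴 × ℝ)) (f := fun vs => vs.2.1) (g := fun vs => vs.2.2) hη_meas hk_meas hk_bdd
      measurable_snd.fst measurable_snd.snd (int_comp mpV23 hηpm hηpair)
  have b13 : Integrable (fun vs : (𝒴 × ℝ) × (𝒴 × ℝ) × (𝒴 × ℝ) =>
      η y₁ vs.2.1.1 * k ((z₁ - vs.2.1.2) / b))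
      ((ν.prod μZ).prod ((ν.prod μZ).prod (ν.prod μZ))) :=
    int_g (δ := (𝒴 × ℝ) × (𝒴 × ℝ) × (𝒴 × ℝ)) (f := fun _ => ((y₁, z₁) : 𝒴 × ℝ)) (g := fun vs => vs.2.1) hη_meas hk_meas hk_bdd
      measurable_const measurable_snd.fst (int_comp (mpVy.comp mpV2) hηc hη1c)
  have b24 : Integrable (fun vs : (𝒴 × ℝ) × (𝒴 × ℝ) × (𝒴 × ℝ) =>
      η vs.1.1 vs.2.2.1 * k ((vs.1.2 - vs.2.2.2) / b))
      ((ν.prod μZ).prod ((ν.prod μZ).prod (ν.prod μZ))) :=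
    int_g (δ := (𝒴 × ℝ) × (𝒴 × ℝ) × (𝒴 × ℝ)) (f := fun vs => vs.1) (g := fun vs => vs.2.2) hη_meas hk_meas hk_bdd
      measurable_fst measurable_snd.snd (int_comp mpV13 hηpm hηpair)
  have b21 : Integrable (fun vs : (𝒴 × ℝ) × (𝒴 × ℝ) × (𝒴 × ℝ) =>
      η vs.2.1.1 vs.1.1 * k ((vs.2.1.2 - vs.1.2) / b))
      ((ν.prod μZ).prod ((ν.prod μZ).prod (ν.prod μZ))) :=
    int_g (δ := (𝒴 × ℝ) × (𝒴 × ℝ) × (𝒴 × ℝ)) (f := fun vs => vs.2.1) (g := fun vs => vs.1) hη_meas hk_meas hk_bdd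
      measurable_snd.fst measurable_fst (int_comp mpV21 hηpm hηpair)
  have b14 : Integrable (fun vs : (𝒴 × ℝ) × (𝒴 × ℝ) × (𝒴 × ℝ) =>
      η y₁ vs.2.2.1 * k ((z₁ - vs.2.2.2) / b))
      ((ν.prod μZ).prod ((ν.prod μZ).prod (ν.prod μZ))) :=
    int_g (δ := (𝒴 × ℝ) × (𝒴 × ℝ) × (𝒴 × ℝ)) (f := fun _ => ((y₁, z₁) : 𝒴 × ℝ)) (g := fun vs => vs.2.2) hη_meas hk_meas hk_bdd
      measurable_const measurable_snd.snd (int_comp (mpVy.comp mpV3) hηc hη1c)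
  have b21' : Integrable (fun vs : (𝒴 × ℝ) × (𝒴 × ℝ) × (𝒴 × ℝ) =>
      η vs.2.1.1 y₁ * k ((vs.2.1.2 - z₁) / b))
      ((ν.prod μZ).prod ((ν.prod μZ).prod (ν.prod μZ))) :=
    int_g (δ := (𝒴 × ℝ) × (𝒴 × ℝ) × (𝒴 × ℝ)) (f := fun vs => vs.2.1) (g := fun _ => ((y₁, z₁) : 𝒴 × ℝ)) hη_meas hk_meas hk_bdd
      measurable_snd.fst measurable_const (int_comp (mpVy.comp mpV2) hηc' hη1')
  have b43 : Integrable (fun vs : (𝒴 × ℝ) × (𝒴 × ℝ) × (𝒴 × ℝ) =>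
      η vs.2.2.1 vs.2.1.1 * k ((vs.2.2.2 - vs.2.1.2) / b))
      ((ν.prod μZ).prod ((ν.prod μZ).prod (ν.prod μZ))) :=
    int_g (δ := (𝒴 × ℝ) × (𝒴 × ℝ) × (𝒴 × ℝ)) (f := fun vs => vs.2.2) (g := fun vs => vs.2.1) hη_meas hk_meas hk_bdd
      measurable_snd.snd measurable_snd.fst (int_comp mpV32 hηpm hηpair)
  have b23 : Integrable (fun vs : (𝒴 × ℝ) × (𝒴 × ℝ) × (𝒴 × ℝ) =>
      η vs.1.1 vs.2.1.1 * k ((vs.1.2 - vs.2.1.2) / b))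
      ((ν.prod μZ).prod ((ν.prod μZ).prod (ν.prod μZ))) :=
    int_g (δ := (𝒴 × ℝ) × (𝒴 × ℝ) × (𝒴 × ℝ)) (f := fun vs => vs.1) (g := fun vs => vs.2.1) hη_meas hk_meas hk_bdd
      measurable_fst measurable_snd.fst (int_comp mpV12 hηpm hηpair)
  -- integrable B blocks
  have iB1 : Integrable (fun vs : (𝒴 × ℝ) × (𝒴 × ℝ) × (𝒴 × ℝ) =>
      η y₁ vs.1.1 * k ((z₁ - vs.1.2) / b) + η vs.2.1.1 vs.2.2.1 * k ((vs.2.1.2 - vs.2.2.2) / b)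
        - η y₁ vs.2.1.1 * k ((z₁ - vs.2.1.2) / b) - η vs.1.1 vs.2.2.1 * k ((vs.1.2 - vs.2.2.2) / b))
      ((ν.prod μZ).prod ((ν.prod μZ).prod (ν.prod μZ))) :=
    ((b12.add b34).sub b13).sub b24
  have iB2 : Integrable (fun vs : (𝒴 × ℝ) × (𝒴 × ℝ) × (𝒴 × ℝ) =>
      η vs.2.1.1 vs.1.1 * k ((vs.2.1.2 - vs.1.2) / b) + η y₁ vs.2.2.1 * k ((z₁ - vs.2.2.2) / b)
        - η vs.2.1.1 y₁ * k ((vs.2.1.2 - z₁) / b) - η vs.1.1 vs.2.2.1 * k ((vs.1.2 - vs.2.2.2) / b))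
      ((ν.prod μZ).prod ((ν.prod μZ).prod (ν.prod μZ))) :=
    ((b21.add b14).sub b21').sub b24
  have iB3 : Integrable (fun vs : (𝒴 × ℝ) × (𝒴 × ℝ) × (𝒴 × ℝ) =>
      η y₁ vs.1.1 * k ((z₁ - vs.1.2) / b) + η vs.2.2.1 vs.2.1.1 * k ((vs.2.2.2 - vs.2.1.2) / b)
        - η y₁ vs.2.2.1 * k ((z₁ - vs.2.2.2) / b) - η vs.1.1 vs.2.1.1 * k ((vs.1.2 - vs.2.1.2) / b))
      ((ν.prod μZ).prod ((ν.prod μZ).prod (ν.prod μZ))) :=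
    ((b12.add b43).sub b14).sub b23
  -- measurable A blocks
  have mA1 : Measurable (fun xs : 𝒳 × 𝒳 × 𝒳 =>
      ζ x₁ xs.1 + ζ xs.2.1 xs.2.2 - ζ x₁ xs.2.1 - ζ xs.1 xs.2.2) :=
    (((meas_z (δ := 𝒳 × 𝒳 × 𝒳) (f := fun _ => x₁) (g := fun xs => xs.1) hζ_meas measurable_const measurable_fst).add
      (meas_z (δ := 𝒳 × 𝒳 × 𝒳) (f := fun xs => xs.2.1) (g := fun xs => xs.2.2) hζ_meas measurable_snd.fst
        measurable_snd.snd)).sub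
      (meas_z (δ := 𝒳 × 𝒳 × 𝒳) (f := fun _ => x₁) (g := fun xs => xs.2.1) hζ_meas measurable_const
        measurable_snd.fst)).sub
      (meas_z (δ := 𝒳 × 𝒳 × 𝒳) (f := fun xs => xs.1) (g := fun xs => xs.2.2) hζ_meas measurable_fst
        measurable_snd.snd)
  have mA2 : Measurable (fun xs : 𝒳 × 𝒳 × 𝒳 =>
      ζ xs.2.1 xs.1 + ζ x₁ xs.2.2 - ζ xs.2.1 x₁ - ζ xs.1 xs.2.2) :=
    (((meas_z (δ := 𝒳 × 𝒳 × 𝒳) (f := fun xs => xs.2.1) (g := fun xs => xs.1) hζ_meas measurable_snd.fst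
        measurable_fst).add
      (meas_z (δ := 𝒳 × 𝒳 × 𝒳) (f := fun _ => x₁) (g := fun xs => xs.2.2) hζ_meas measurable_const
        measurable_snd.snd)).sub
      (meas_z (δ := 𝒳 × 𝒳 × 𝒳) (f := fun xs => xs.2.1) (g := fun _ => x₁) hζ_meas measurable_snd.fst
        measurable_const)).sub
      (meas_z (δ := 𝒳 × 𝒳 × 𝒳) (f := fun xs => xs.1) (g := fun xs => xs.2.2) hζ_meas measurable_fst
        measurable_snd.snd)
  have mA3 : Measurable (fun xs : 𝒳 × 𝒳 × 𝒳 =>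
      ζ x₁ xs.1 + ζ xs.2.2 xs.2.1 - ζ x₁ xs.2.2 - ζ xs.1 xs.2.1) :=
    (((meas_z (δ := 𝒳 × 𝒳 × 𝒳) (f := fun _ => x₁) (g := fun xs => xs.1) hζ_meas measurable_const measurable_fst).add
      (meas_z (δ := 𝒳 × 𝒳 × 𝒳) (f := fun xs => xs.2.2) (g := fun xs => xs.2.1) hζ_meas measurable_snd.snd
        measurable_snd.fst)).sub
      (meas_z (δ := 𝒳 × 𝒳 × 𝒳) (f := fun _ => x₁) (g := fun xs => xs.2.2) hζ_meas measurable_const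
        measurable_snd.snd)).sub
      (meas_z (δ := 𝒳 × 𝒳 × 𝒳) (f := fun xs => xs.1) (g := fun xs => xs.2.1) hζ_meas measurable_fst
        measurable_snd.fst)
  -- measurable B blocks
  have mB1 : Measurable (fun vs : (𝒴 × ℝ) × (𝒴 × ℝ) × (𝒴 × ℝ) =>
      η y₁ vs.1.1 * k ((z₁ - vs.1.2) / b) + η vs.2.1.1 vs.2.2.1 * k ((vs.2.1.2 - vs.2.2.2) / b)
        - η y₁ vs.2.1.1 * k ((z₁ - vs.2.1.2) / b)
        - η vs.1.1 vs.2.2.1 * k ((vs.1.2 - vs.2.2.2) / b)) :=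
    (((meas_g (δ := (𝒴 × ℝ) × (𝒴 × ℝ) × (𝒴 × ℝ)) (f := fun _ => ((y₁, z₁) : 𝒴 × ℝ)) (g := fun vs => vs.1) hη_meas hk_meas
        measurable_const measurable_fst).add
      (meas_g (δ := (𝒴 × ℝ) × (𝒴 × ℝ) × (𝒴 × ℝ)) (f := fun vs => vs.2.1) (g := fun vs => vs.2.2) hη_meas hk_meas
        measurable_snd.fst measurable_snd.snd)).sub
      (meas_g (δ := (𝒴 × ℝ) × (𝒴 × ℝ) × (𝒴 × ℝ)) (f := fun _ => ((y₁, z₁) : 𝒴 × ℝ)) (g := fun vs => vs.2.1) hη_meas hk_meas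
        measurable_const measurable_snd.fst)).sub
      (meas_g (δ := (𝒴 × ℝ) × (𝒴 × ℝ) × (𝒴 × ℝ)) (f := fun vs => vs.1) (g := fun vs => vs.2.2) hη_meas hk_meas
        measurable_fst measurable_snd.snd)
  have mB2 : Measurable (fun vs : (𝒴 × ℝ) × (𝒴 × ℝ) × (𝒴 × ℝ) =>
      η vs.2.1.1 vs.1.1 * k ((vs.2.1.2 - vs.1.2) / b) + η y₁ vs.2.2.1 * k ((z₁ - vs.2.2.2) / b)
        - η vs.2.1.1 y₁ * k ((vs.2.1.2 - z₁) / b)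
        - η vs.1.1 vs.2.2.1 * k ((vs.1.2 - vs.2.2.2) / b)) :=
    (((meas_g (δ := (𝒴 × ℝ) × (𝒴 × ℝ) × (𝒴 × ℝ)) (f := fun vs => vs.2.1) (g := fun vs => vs.1) hη_meas hk_meas
        measurable_snd.fst measurable_fst).add
      (meas_g (δ := (𝒴 × ℝ) × (𝒴 × ℝ) × (𝒴 × ℝ)) (f := fun _ => ((y₁, z₁) : 𝒴 × ℝ)) (g := fun vs => vs.2.2) hη_meas hk_meas
        measurable_const measurable_snd.snd)).sub
      (meas_g (δ := (𝒴 × ℝ) × (𝒴 × ℝ) × (𝒴 × ℝ)) (f := fun vs => vs.2.1) (g := fun _ => ((y₁, z₁) : 𝒴 × ℝ)) hη_meas hk_meas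
        measurable_snd.fst measurable_const)).sub
      (meas_g (δ := (𝒴 × ℝ) × (𝒴 × ℝ) × (𝒴 × ℝ)) (f := fun vs => vs.1) (g := fun vs => vs.2.2) hη_meas hk_meas
        measurable_fst measurable_snd.snd)
  have mB3 : Measurable (fun vs : (𝒴 × ℝ) × (𝒴 × ℝ) × (𝒴 × ℝ) =>
      η y₁ vs.1.1 * k ((z₁ - vs.1.2) / b) + η vs.2.2.1 vs.2.1.1 * k ((vs.2.2.2 - vs.2.1.2) / b)
        - η y₁ vs.2.2.1 * k ((z₁ - vs.2.2.2) / b)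
        - η vs.1.1 vs.2.1.1 * k ((vs.1.2 - vs.2.1.2) / b)) :=
    (((meas_g (δ := (𝒴 × ℝ) × (𝒴 × ℝ) × (𝒴 × ℝ)) (f := fun _ => ((y₁, z₁) : 𝒴 × ℝ)) (g := fun vs => vs.1) hη_meas hk_meas
        measurable_const measurable_fst).add
      (meas_g (δ := (𝒴 × ℝ) × (𝒴 × ℝ) × (𝒴 × ℝ)) (f := fun vs => vs.2.2) (g := fun vs => vs.2.1) hη_meas hk_meas
        measurable_snd.snd measurable_snd.fst)).sub
      (meas_g (δ := (𝒴 × ℝ) × (𝒴 × ℝ) × (𝒴 × ℝ)) (f := fun _ => ((y₁, z₁) : 𝒴 × ℝ)) (g := fun vs => vs.2.2) hη_meas hk_meas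
        measurable_const measurable_snd.snd)).sub
      (meas_g (δ := (𝒴 × ℝ) × (𝒴 × ℝ) × (𝒴 × ℝ)) (f := fun vs => vs.1) (g := fun vs => vs.2.1) hη_meas hk_meas
        measurable_fst measurable_snd.fst)
  -- the three permuted-kernel terms
  have T1 := term_main μ ν μZ
    (fun q => hbKer ζ η k b ((x₁, y₁), z₁) q.1 q.2.1 q.2.2)
    (fun xs => ζ x₁ xs.1 + ζ xs.2.1 xs.2.2 - ζ x₁ xs.2.1 - ζ xs.1 xs.2.2)
    (fun vs => η y₁ vs.1.1 * k ((z₁ - vs.1.2) / b)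
        + η vs.2.1.1 vs.2.2.1 * k ((vs.2.1.2 - vs.2.2.2) / b)
        - η y₁ vs.2.1.1 * k ((z₁ - vs.2.1.2) / b)
        - η vs.1.1 vs.2.2.1 * k ((vs.1.2 - vs.2.2.2) / b))
    mA1 mB1 iA1 iB1
    (fun x => (x.2.1, (x.1, x.2.2))) (mp_s1 μ)
    (fun xs => by dsimp only; ring)
    (by funext q; unfold hbKer; dsimp only)
  have T2 := term_main μ ν μZ
    (fun q => hbKer ζ η k b q.2.1 q.1 ((x₁, y₁), z₁) q.2.2)
    (fun xs => ζ xs.2.1 xs.1 + ζ x₁ xs.2.2 - ζ xs.2.1 x₁ - ζ xs.1 xs.2.2)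
    (fun vs => η vs.2.1.1 vs.1.1 * k ((vs.2.1.2 - vs.1.2) / b)
        + η y₁ vs.2.2.1 * k ((z₁ - vs.2.2.2) / b)
        - η vs.2.1.1 y₁ * k ((vs.2.1.2 - z₁) / b)
        - η vs.1.1 vs.2.2.1 * k ((vs.1.2 - vs.2.2.2) / b))
    mA2 mB2 iA2 iB2
    (fun x => (x.1, (x.2.2, x.2.1))) (mp_s2 μ)
    (fun xs => by
      dsimp only
      rw [hζ_symm xs.2.2 xs.1, hζ_symm x₁ xs.2.1, hζ_symm xs.2.2 x₁, hζ_symm xs.1 xs.2.1]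
      ring)
    (by funext q; unfold hbKer; dsimp only)
  have T3 := term_main μ ν μZ
    (fun q => hbKer ζ η k b ((x₁, y₁), z₁) q.1 q.2.2 q.2.1)
    (fun xs => ζ x₁ xs.1 + ζ xs.2.2 xs.2.1 - ζ x₁ xs.2.2 - ζ xs.1 xs.2.1)
    (fun vs => η y₁ vs.1.1 * k ((z₁ - vs.1.2) / b)
        + η vs.2.2.1 vs.2.1.1 * k ((vs.2.2.2 - vs.2.1.2) / b)
        - η y₁ vs.2.2.1 * k ((z₁ - vs.2.2.2) / b)
        - η vs.1.1 vs.2.1.1 * k ((vs.1.2 - vs.2.1.2) / b))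
    mA3 mB3 iA3 iB3
    (fun x => (x.2.2, (x.2.1, x.1))) (mp_s3 μ)
    (fun xs => by dsimp only; ring)
    (by funext q; unfold hbKer; dsimp only)
  obtain ⟨hi1, hz1⟩ := T1
  obtain ⟨hi2, hz2⟩ := T2
  obtain ⟨hi3, hz3⟩ := T3
  -- fold the iterated integral into a joint integral
  have hjoint : Integrable
      (fun q : ((𝒳 × 𝒴) × ℝ) × (((𝒳 × 𝒴) × ℝ) × ((𝒳 × 𝒴) × ℝ)) =>
        hbBar ζ η k b ((x₁, y₁), z₁) q.1 q.2.1 q.2.2)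
      (((μ.prod ν).prod μZ).prod ((((μ.prod ν).prod μZ).prod ((μ.prod ν).prod μZ)))) :=
    Integrable.const_mul ((hi1.add hi2).add hi3) (1 / 3)
  have hslice := hjoint.prod_right_ae
  have hcong : (fun w₂ => ∫ w₃, ∫ w₄, hbBar ζ η k b ((x₁, y₁), z₁) w₂ w₃ w₄
        ∂((μ.prod ν).prod μZ) ∂((μ.prod ν).prod μZ))
      =ᵐ[(μ.prod ν).prod μZ]
      (fun w₂ => ∫ r, hbBar ζ η k b ((x₁, y₁), z₁) w₂ r.1 r.2
        ∂(((μ.prod ν).prod μZ).prod ((μ.prod ν).prod μZ))) := by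
    filter_upwards [hslice] with w₂ h2
    exact integral_integral h2
  rw [integral_congr_ae hcong]
  have hfold : (∫ w₂, ∫ r, hbBar ζ η k b ((x₁, y₁), z₁) w₂ r.1 r.2
        ∂(((μ.prod ν).prod μZ).prod ((μ.prod ν).prod μZ)) ∂((μ.prod ν).prod μZ))
      = ∫ q, hbBar ζ η k b ((x₁, y₁), z₁) q.1 q.2.1 q.2.2
        ∂(((μ.prod ν).prod μZ).prod ((((μ.prod ν).prod μZ).prod ((μ.prod ν).prod μZ)))) :=
    integral_integral hjoint
  rw [hfold]
  have e2 : (∫ q, (hbKer ζ η k b ((x₁, y₁), z₁) q.1 q.2.1 q.2.2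
          + hbKer ζ η k b q.2.1 q.1 ((x₁, y₁), z₁) q.2.2
          + hbKer ζ η k b ((x₁, y₁), z₁) q.1 q.2.2 q.2.1)
        ∂(((μ.prod ν).prod μZ).prod ((((μ.prod ν).prod μZ).prod ((μ.prod ν).prod μZ)))))
      = (∫ q, (hbKer ζ η k b ((x₁, y₁), z₁) q.1 q.2.1 q.2.2
          + hbKer ζ η k b q.2.1 q.1 ((x₁, y₁), z₁) q.2.2)
        ∂(((μ.prod ν).prod μZ).prod ((((μ.prod ν).prod μZ).prod ((μ.prod ν).prod μZ)))))
      + ∫ q, hbKer ζ η k b ((x₁, y₁), z₁) q.1 q.2.2 q.2.1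
        ∂(((μ.prod ν).prod μZ).prod ((((μ.prod ν).prod μZ).prod ((μ.prod ν).prod μZ)))) :=
    integral_add (hi1.add hi2) hi3
  have e3 : (∫ q, (hbKer ζ η k b ((x₁, y₁), z₁) q.1 q.2.1 q.2.2
          + hbKer ζ η k b q.2.1 q.1 ((x₁, y₁), z₁) q.2.2)
        ∂(((μ.prod ν).prod μZ).prod ((((μ.prod ν).prod μZ).prod ((μ.prod ν).prod μZ)))))
      = (∫ q, hbKer ζ η k b ((x₁, y₁), z₁) q.1 q.2.1 q.2.2
        ∂(((μ.prod ν).prod μZ).prod ((((μ.prod ν).prod μZ).prod ((μ.prod ν).prod μZ)))))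
      + ∫ q, hbKer ζ η k b q.2.1 q.1 ((x₁, y₁), z₁) q.2.2
        ∂(((μ.prod ν).prod μZ).prod ((((μ.prod ν).prod μZ).prod ((μ.prod ν).prod μZ)))) :=
    integral_add hi1 hi2
  have hz1' : (∫ q, hbKer ζ η k b ((x₁, y₁), z₁) q.1 q.2.1 q.2.2
      ∂(((μ.prod ν).prod μZ).prod ((((μ.prod ν).prod μZ).prod ((μ.prod ν).prod μZ))))) = 0 := hz1
  have hz2' : (∫ q, hbKer ζ η k b q.2.1 q.1 ((x₁, y₁), z₁) q.2.2
      ∂(((μ.prod ν).prod μZ).prod ((((μ.prod ν).prod μZ).prod ((μ.prod ν).prod μZ))))) = 0 := hz2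
  have hz3' : (∫ q, hbKer ζ η k b ((x₁, y₁), z₁) q.1 q.2.2 q.2.1
      ∂(((μ.prod ν).prod μZ).prod ((((μ.prod ν).prod μZ).prod ((μ.prod ν).prod μZ))))) = 0 := hz3
  unfold hbBar
  rw [integral_const_mul, e2, e3, hz1', hz2', hz3']
  norm_num
end
end

section
/- Under the null hypothesis (ω = μ ⊗ ν and Z independent of (X,Y)), assuming k is bounded, E[ζ(X₁,X₂)²] < ∞ and E[η(Y₁,Y₂)²] < ∞, the second-order projection satisfies, for ω⊗λ-almost every pair of triples w₁=(x₁,y₁,z₁), w₂=(x₂,y₂,z₂): h_{b2}(w₁,w₂) = (1/6)·ζ̃(x₁,x₂)·ϱ̃((y₁,z₁),(y₂,z₂)), where ζ̃(x₁,x₂) = ζ(x₁,x₂) − E[ζ(x₁,X)] − E[ζ(x₂,X)] + E[ζ(X,X′)] (X, X′ i.i.d. ~ μ) and ϱ̃((y₁,z₁),(y₂,z₂)) = η(y₁,y₂)κ_b(z₁,z₂) − E[η(y₁,Y)κ_b(z₁,Z)] − E[η(y₂,Y)κ_b(z₂,Z)] + E[η(Y,Y′)κ_b(Z,Z′)] ((Y,Z),(Y′,Z′)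 i.i.d. ~ ν ⊗ law(Z)). Consequently E[h_{b2}(W₁,W₂)²] = (1/36)·E[ζ̃(X₁,X₂)²]·E[ϱ̃((Y₁,Z₁),(Y₂,Z₂))²]. -/
open MeasureTheory

noncomputable section

/-- The second-order projection `h_{b2}(w₁,w₂) = E[h̄_b(w₁,w₂,W₃,W₄)]`, where `W₃, W₄` are
i.i.d. with law `ρ`. -/
def hb2 {𝒳 𝒴 : Type*} [MeasurableSpace 𝒳] [MeasurableSpace 𝒴]
    (ζ : 𝒳 → 𝒳 → ℝ) (η : 𝒴 → 𝒴 → ℝ) (k : ℝ → ℝ) (b : ℝ)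
    (ρ : Measure ((𝒳 × 𝒴) × ℝ)) (w₁ w₂ : (𝒳 × 𝒴) × ℝ) : ℝ :=
  ∫ w₃, (∫ w₄, hbBar ζ η k b w₁ w₂ w₃ w₄ ∂ρ) ∂ρ

/-- The `μ`-centered kernel `ζ̃`. -/
def zetaTilde {𝒳 : Type*} [MeasurableSpace 𝒳] (ζ : 𝒳 → 𝒳 → ℝ) (μ : Measure 𝒳)
    (x₁ x₂ : 𝒳) : ℝ :=
  ζ x₁ x₂ - (∫ x, ζ x₁ x ∂μ) - (∫ x, ζ x₂ x ∂μ) + ∫ p, ζ p.1 p.2 ∂(μ.prod μ)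

/-- The centered lifted kernel `ϱ̃` on `𝒴 × ℝ`, centered with respect to `ν ⊗ μZ`. -/
def rhoTilde {𝒴 : Type*} [MeasurableSpace 𝒴] (η : 𝒴 → 𝒴 → ℝ) (k : ℝ → ℝ) (b : ℝ)
    (ν : Measure 𝒴) (μZ : Measure ℝ) (v₁ v₂ : 𝒴 × ℝ) : ℝ :=
  η v₁.1 v₂.1 * k ((v₁.2 - v₂.2) / b)
    - (∫ v, η v₁.1 v.1 * k ((v₁.2 - v.2) / b) ∂(ν.prod μZ))
    - (∫ v, η v₂.1 v.1 * k ((v₂.2 - v.2) / b) ∂(ν.prod μZ))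
    + ∫ q, η q.1.1 q.2.1 * k ((q.1.2 - q.2.2) / b) ∂((ν.prod μZ).prod (ν.prod μZ))

namespace Stmt6Aux

variable {α β : Type*} [MeasurableSpace α] [MeasurableSpace β]

/-- abstract kernel on a product space -/
def Hker (ζ : α → α → ℝ) (g : β → β → ℝ) (u₁ u₂ u₃ u₄ : α × β) : ℝ :=
  (1 / 4) * (ζ u₁.1 u₂.1 + ζ u₃.1 u₄.1 - ζ u₁.1 u₃.1 - ζ u₂.1 u₄.1) *
    (g u₁.2 u₂.2 + g u₃.2 u₄.2 - g u₁.2 u₃.2 - g u₂.2 u₄.2)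

def Hbar (ζ : α → α → ℝ) (g : β → β → ℝ) (u₁ u₂ u₃ u₄ : α × β) : ℝ :=
  (1 / 3) * (Hker ζ g u₁ u₂ u₃ u₄ + Hker ζ g u₃ u₂ u₁ u₄ + Hker ζ g u₁ u₂ u₄ u₃)

def H2 (ζ : α → α → ℝ) (g : β → β → ℝ) (m : Measure (α × β)) (u₁ u₂ : α × β) : ℝ :=
  ∫ u₃, (∫ u₄, Hbar ζ g u₁ u₂ u₃ u₄ ∂m) ∂m

/-- The lifted kernel on `𝒴 × ℝ`. -/
def liftKer {𝒴 : Type*} (η : 𝒴 → 𝒴 → ℝ) (k : ℝ → ℝ) (b : ℝ) (v v' : 𝒴 × ℝ) : ℝ :=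
  η v.1 v'.1 * k ((v.2 - v'.2) / b)

lemma ae_fst {γ δ : Type*} [MeasurableSpace γ] [MeasurableSpace δ]
    (m : Measure γ) (m' : Measure δ) [IsProbabilityMeasure m'] {p : γ → Prop}
    (h : ∀ᵐ x ∂m, p x) : ∀ᵐ u : γ × δ ∂(m.prod m'), p u.1 :=
  ae_of_ae_map measurable_fst.aemeasurable
    (by rwa [Measure.map_fst_prod, measure_univ, one_smul])

lemma ae_snd {γ δ : Type*} [MeasurableSpace γ] [MeasurableSpace δ]
    (m : Measure γ) (m' : Measure δ) [IsProbabilityMeasure m] [SFinite m'] {p : δ → Prop}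
    (h : ∀ᵐ x ∂m', p x) : ∀ᵐ u : γ × δ ∂(m.prod m'), p u.2 :=
  ae_of_ae_map measurable_snd.aemeasurable
    (by rwa [Measure.map_snd_prod, measure_univ, one_smul])

lemma int4 {γ : Type*} [MeasurableSpace γ] (m : Measure γ) [IsProbabilityMeasure m]
    (a c : ℝ) {f g : γ → ℝ} (hf : Integrable f m) (hg : Integrable g m) :
    ∫ x, (a + f x - c - g x) ∂m = a + (∫ x, f x ∂m) - c - ∫ x, g x ∂m := by
  have h1 : (fun x => a + f x - c - g x) = fun x => (a - c) + (f x - g x) := by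
    funext x; ring
  have hfg : Integrable (fun x => f x - g x) m := hf.sub hg
  rw [h1, integral_add (integrable_const _) hfg, integral_const,
    integral_sub hf hg]
  simp; ring

lemma int_comb {γ : Type*} [MeasurableSpace γ] (m : Measure γ) [IsProbabilityMeasure m]
    (a c : ℝ) {f g : γ → ℝ} (hf : Integrable f m) (hg : Integrable g m) :
    ∫ x, (a + f x - g x - c) ∂m = a + (∫ x, f x ∂m) - (∫ x, g x ∂m) - c := by
  have h1 : (fun x => a + f x - g x - c) = fun x => (a - c) + (f x - g x) := by
    funext x; ring
  have hfg : Integrable (fun x => f x - g x) m := hf.sub hg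
  rw [h1, integral_add (integrable_const _) hfg, integral_const,
    integral_sub hf hg]
  simp; ring

lemma int_comb2 {γ : Type*} [MeasurableSpace γ] (m : Measure γ) [IsProbabilityMeasure m]
    (a c : ℝ) {f g : γ → ℝ} (hf : Integrable f m) (hg : Integrable g m) :
    ∫ x, (f x + a - g x - c) ∂m = (∫ x, f x ∂m) + a - (∫ x, g x ∂m) - c := by
  have h1 : (fun x => f x + a - g x - c) = fun x => (a - c) + (f x - g x) := by
    funext x; ring
  have hfg : Integrable (fun x => f x - g x) m := hf.sub hg
  rw [h1, integral_add (integrable_const _) hfg, integral_const,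
    integral_sub hf hg]
  simp; ring

variable (ζ : α → α → ℝ) (g : β → β → ℝ) (μ : Measure α) (ν : Measure β)

lemma inner_eq [IsProbabilityMeasure μ] [IsProbabilityMeasure ν]
    (hζsymm : ∀ x x', ζ x x' = ζ x' x) (hgsymm : ∀ v v', g v v' = g v' v)
    (u₁ u₂ u₃ : α × β)
    (h1x : Integrable (ζ u₁.1) μ) (h2x : Integrable (ζ u₂.1) μ) (h3x : Integrable (ζ u₃.1) μ)
    (h1v : Integrable (g u₁.2) ν) (h2v : Integrable (g u₂.2) ν) (h3v : Integrable (g u₃.2) ν) :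
    ∫ u₄, Hbar ζ g u₁ u₂ u₃ u₄ ∂(μ.prod ν) =
      (1/3) * ((1/4) * ((ζ u₁.1 u₂.1 + (∫ x, ζ u₃.1 x ∂μ) - ζ u₁.1 u₃.1 - ∫ x, ζ u₂.1 x ∂μ)
            * (g u₁.2 u₂.2 + (∫ v, g u₃.2 v ∂ν) - g u₁.2 u₃.2 - ∫ v, g u₂.2 v ∂ν))
        + (1/4) * ((ζ u₂.1 u₃.1 + (∫ x, ζ u₁.1 x ∂μ) - ζ u₁.1 u₃.1 - ∫ x, ζ u₂.1 x ∂μ)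
            * (g u₂.2 u₃.2 + (∫ v, g u₁.2 v ∂ν) - g u₁.2 u₃.2 - ∫ v, g u₂.2 v ∂ν))
        + (1/4) * ((ζ u₁.1 u₂.1 + (∫ x, ζ u₃.1 x ∂μ) - ζ u₂.1 u₃.1 - ∫ x, ζ u₁.1 x ∂μ)
            * (g u₁.2 u₂.2 + (∫ v, g u₃.2 v ∂ν) - g u₂.2 u₃.2 - ∫ v, g u₁.2 v ∂ν))) := by
  have hP1 : Integrable (fun x => ζ u₁.1 u₂.1 + ζ u₃.1 x - ζ u₁.1 u₃.1 - ζ u₂.1 x) μ :=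
    (((integrable_const _).add h3x).sub (integrable_const _)).sub h2x
  have hQ1 : Integrable (fun v => g u₁.2 u₂.2 + g u₃.2 v - g u₁.2 u₃.2 - g u₂.2 v) ν :=
    (((integrable_const _).add h3v).sub (integrable_const _)).sub h2v
  have hP2 : Integrable (fun x => ζ u₂.1 u₃.1 + ζ u₁.1 x - ζ u₁.1 u₃.1 - ζ u₂.1 x) μ :=
    (((integrable_const _).add h1x).sub (integrable_const _)).sub h2x
  have hQ2 : Integrable (fun v => g u₂.2 u₃.2 + g u₁.2 v - g u₁.2 u₃.2 - g u₂.2 v) ν :=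
    (((integrable_const _).add h1v).sub (integrable_const _)).sub h2v
  have hP3 : Integrable (fun x => ζ u₁.1 u₂.1 + ζ u₃.1 x - ζ u₂.1 u₃.1 - ζ u₁.1 x) μ :=
    (((integrable_const _).add h3x).sub (integrable_const _)).sub h1x
  have hQ3 : Integrable (fun v => g u₁.2 u₂.2 + g u₃.2 v - g u₂.2 u₃.2 - g u₁.2 v) ν :=
    (((integrable_const _).add h3v).sub (integrable_const _)).sub h1v
  have hi1 : Integrable (fun u : α × β =>
      (1/4) * ((ζ u₁.1 u₂.1 + ζ u₃.1 u.1 - ζ u₁.1 u₃.1 - ζ u₂.1 u.1)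
        * (g u₁.2 u₂.2 + g u₃.2 u.2 - g u₁.2 u₃.2 - g u₂.2 u.2))) (μ.prod ν) :=
    (hP1.mul_prod hQ1).const_mul _
  have hi2 : Integrable (fun u : α × β =>
      (1/4) * ((ζ u₂.1 u₃.1 + ζ u₁.1 u.1 - ζ u₁.1 u₃.1 - ζ u₂.1 u.1)
        * (g u₂.2 u₃.2 + g u₁.2 u.2 - g u₁.2 u₃.2 - g u₂.2 u.2))) (μ.prod ν) :=
    (hP2.mul_prod hQ2).const_mul _
  have hi3 : Integrable (fun u : α × β =>
      (1/4) * ((ζ u₁.1 u₂.1 + ζ u₃.1 u.1 - ζ u₂.1 u₃.1 - ζ u₁.1 u.1)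
        * (g u₁.2 u₂.2 + g u₃.2 u.2 - g u₂.2 u₃.2 - g u₁.2 u.2))) (μ.prod ν) :=
    (hP3.mul_prod hQ3).const_mul _
  have hi12 : Integrable (fun u : α × β =>
      (1/4) * ((ζ u₁.1 u₂.1 + ζ u₃.1 u.1 - ζ u₁.1 u₃.1 - ζ u₂.1 u.1)
        * (g u₁.2 u₂.2 + g u₃.2 u.2 - g u₁.2 u₃.2 - g u₂.2 u.2))
      + (1/4) * ((ζ u₂.1 u₃.1 + ζ u₁.1 u.1 - ζ u₁.1 u₃.1 - ζ u₂.1 u.1)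
        * (g u₂.2 u₃.2 + g u₁.2 u.2 - g u₁.2 u₃.2 - g u₂.2 u.2))) (μ.prod ν) :=
    hi1.add hi2
  have hfun : (fun u₄ => Hbar ζ g u₁ u₂ u₃ u₄) = fun u₄ : α × β =>
      (1/3) * ((1/4) * ((ζ u₁.1 u₂.1 + ζ u₃.1 u₄.1 - ζ u₁.1 u₃.1 - ζ u₂.1 u₄.1)
            * (g u₁.2 u₂.2 + g u₃.2 u₄.2 - g u₁.2 u₃.2 - g u₂.2 u₄.2))
        + (1/4) * ((ζ u₂.1 u₃.1 + ζ u₁.1 u₄.1 - ζ u₁.1 u₃.1 - ζ u₂.1 u₄.1)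
            * (g u₂.2 u₃.2 + g u₁.2 u₄.2 - g u₁.2 u₃.2 - g u₂.2 u₄.2))
        + (1/4) * ((ζ u₁.1 u₂.1 + ζ u₃.1 u₄.1 - ζ u₂.1 u₃.1 - ζ u₁.1 u₄.1)
            * (g u₁.2 u₂.2 + g u₃.2 u₄.2 - g u₂.2 u₃.2 - g u₁.2 u₄.2))) := by
    funext u
    simp only [Hbar, Hker]
    rw [hζsymm u.1 u₃.1, hζsymm u₃.1 u₂.1, hζsymm u₃.1 u₁.1,
      hgsymm u.2 u₃.2, hgsymm u₃.2 u₂.2, hgsymm u₃.2 u₁.2]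
    ring
  rw [hfun, integral_const_mul, integral_add hi12 hi3, integral_add hi1 hi2,
    integral_const_mul, integral_const_mul, integral_const_mul,
    integral_prod_mul (fun x => ζ u₁.1 u₂.1 + ζ u₃.1 x - ζ u₁.1 u₃.1 - ζ u₂.1 x)
      (fun v => g u₁.2 u₂.2 + g u₃.2 v - g u₁.2 u₃.2 - g u₂.2 v),
    integral_prod_mul (fun x => ζ u₂.1 u₃.1 + ζ u₁.1 x - ζ u₁.1 u₃.1 - ζ u₂.1 x)
      (fun v => g u₂.2 u₃.2 + g u₁.2 v - g u₁.2 u₃.2 - g u₂.2 v),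
    integral_prod_mul (fun x => ζ u₁.1 u₂.1 + ζ u₃.1 x - ζ u₂.1 u₃.1 - ζ u₁.1 x)
      (fun v => g u₁.2 u₂.2 + g u₃.2 v - g u₂.2 u₃.2 - g u₁.2 v),
    int4 μ _ _ h3x h2x, int4 ν _ _ h3v h2v,
    int4 μ _ _ h1x h2x, int4 ν _ _ h1v h2v,
    int4 μ _ _ h3x h1x, int4 ν _ _ h3v h1v]

lemma H2_eq [IsProbabilityMeasure μ] [IsProbabilityMeasure ν]
    (hζsymm : ∀ x x', ζ x x' = ζ x' x) (hgsymm : ∀ v v', g v v' = g v' v)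
    (hζI : Integrable (fun p : α × α => ζ p.1 p.2) (μ.prod μ))
    (hgI : Integrable (fun p : β × β => g p.1 p.2) (ν.prod ν))
    (u₁ u₂ : α × β)
    (h1x : Integrable (ζ u₁.1) μ) (h2x : Integrable (ζ u₂.1) μ)
    (h1v : Integrable (g u₁.2) ν) (h2v : Integrable (g u₂.2) ν) :
    H2 ζ g (μ.prod ν) u₁ u₂ =
      (1/6) * zetaTilde ζ μ u₁.1 u₂.1 * zetaTilde g ν u₁.2 u₂.2 := by
  have hZcI : Integrable (fun x => ∫ x', ζ x x' ∂μ) μ := hζI.integral_prod_left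
  have hGcI : Integrable (fun v => ∫ v', g v v' ∂ν) ν := hgI.integral_prod_left
  have hZc_mean : ∫ x, (∫ x', ζ x x' ∂μ) ∂μ = ∫ p, ζ p.1 p.2 ∂(μ.prod μ) :=
    integral_integral hζI
  have hGc_mean : ∫ v, (∫ v', g v v' ∂ν) ∂ν = ∫ q, g q.1 q.2 ∂(ν.prod ν) :=
    integral_integral hgI
  have hae : ∀ᵐ u₃ ∂(μ.prod ν), Integrable (ζ u₃.1) μ ∧ Integrable (g u₃.2) ν := by
    have h1 : ∀ᵐ x ∂μ, Integrable (ζ x) μ := hζI.prod_right_ae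
    have h2 : ∀ᵐ v ∂ν, Integrable (g v) ν := hgI.prod_right_ae
    have e1 : (μ.prod ν).map Prod.fst = μ := by
      rw [Measure.map_fst_prod]; simp
    have e2 : (μ.prod ν).map Prod.snd = ν := by
      rw [Measure.map_snd_prod]; simp
    have g1 : ∀ᵐ u : α × β ∂(μ.prod ν), Integrable (ζ u.1) μ :=
      ae_of_ae_map measurable_fst.aemeasurable (by rwa [e1])
    have g2 : ∀ᵐ u : α × β ∂(μ.prod ν), Integrable (g u.2) ν :=
      ae_of_ae_map measurable_snd.aemeasurable (by rwa [e2])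
    exact g1.and g2
  have hcong : (fun u₃ => ∫ u₄, Hbar ζ g u₁ u₂ u₃ u₄ ∂(μ.prod ν)) =ᵐ[μ.prod ν]
      fun u₃ : α × β =>
      (1/3) * ((1/4) * ((ζ u₁.1 u₂.1 + (∫ x, ζ u₃.1 x ∂μ) - ζ u₁.1 u₃.1 - ∫ x, ζ u₂.1 x ∂μ)
            * (g u₁.2 u₂.2 + (∫ v, g u₃.2 v ∂ν) - g u₁.2 u₃.2 - ∫ v, g u₂.2 v ∂ν))
        + (1/4) * ((ζ u₂.1 u₃.1 + (∫ x, ζ u₁.1 x ∂μ) - ζ u₁.1 u₃.1 - ∫ x, ζ u₂.1 x ∂μ)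
            * (g u₂.2 u₃.2 + (∫ v, g u₁.2 v ∂ν) - g u₁.2 u₃.2 - ∫ v, g u₂.2 v ∂ν))
        + (1/4) * ((ζ u₁.1 u₂.1 + (∫ x, ζ u₃.1 x ∂μ) - ζ u₂.1 u₃.1 - ∫ x, ζ u₁.1 x ∂μ)
            * (g u₁.2 u₂.2 + (∫ v, g u₃.2 v ∂ν) - g u₂.2 u₃.2 - ∫ v, g u₁.2 v ∂ν))) := by
    filter_upwards [hae] with u₃ hu₃
    exact inner_eq ζ g μ ν hζsymm hgsymm u₁ u₂ u₃ h1x h2x hu₃.1 h1v h2v hu₃.2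
  -- integrability of the three outer product terms
  have hF1 : Integrable (fun x => ζ u₁.1 u₂.1 + (∫ x', ζ x x' ∂μ) - ζ u₁.1 x
      - ∫ x', ζ u₂.1 x' ∂μ) μ :=
    (((integrable_const _).add hZcI).sub h1x).sub (integrable_const _)
  have hG1 : Integrable (fun v => g u₁.2 u₂.2 + (∫ v', g v v' ∂ν) - g u₁.2 v
      - ∫ v', g u₂.2 v' ∂ν) ν :=
    (((integrable_const _).add hGcI).sub h1v).sub (integrable_const _)
  have hF2 : Integrable (fun x => ζ u₂.1 x + (∫ x', ζ u₁.1 x' ∂μ) - ζ u₁.1 x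
      - ∫ x', ζ u₂.1 x' ∂μ) μ :=
    ((h2x.add (integrable_const _)).sub h1x).sub (integrable_const _)
  have hG2 : Integrable (fun v => g u₂.2 v + (∫ v', g u₁.2 v' ∂ν) - g u₁.2 v
      - ∫ v', g u₂.2 v' ∂ν) ν :=
    ((h2v.add (integrable_const _)).sub h1v).sub (integrable_const _)
  have hF3 : Integrable (fun x => ζ u₁.1 u₂.1 + (∫ x', ζ x x' ∂μ) - ζ u₂.1 x
      - ∫ x', ζ u₁.1 x' ∂μ) μ :=
    (((integrable_const _).add hZcI).sub h2x).sub (integrable_const _)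
  have hG3 : Integrable (fun v => g u₁.2 u₂.2 + (∫ v', g v v' ∂ν) - g u₂.2 v
      - ∫ v', g u₁.2 v' ∂ν) ν :=
    (((integrable_const _).add hGcI).sub h2v).sub (integrable_const _)
  have hi1 : Integrable (fun u : α × β =>
      (1/4) * ((ζ u₁.1 u₂.1 + (∫ x, ζ u.1 x ∂μ) - ζ u₁.1 u.1 - ∫ x, ζ u₂.1 x ∂μ)
        * (g u₁.2 u₂.2 + (∫ v, g u.2 v ∂ν) - g u₁.2 u.2 - ∫ v, g u₂.2 v ∂ν))) (μ.prod ν) :=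
    (hF1.mul_prod hG1).const_mul _
  have hi2 : Integrable (fun u : α × β =>
      (1/4) * ((ζ u₂.1 u.1 + (∫ x, ζ u₁.1 x ∂μ) - ζ u₁.1 u.1 - ∫ x, ζ u₂.1 x ∂μ)
        * (g u₂.2 u.2 + (∫ v, g u₁.2 v ∂ν) - g u₁.2 u.2 - ∫ v, g u₂.2 v ∂ν))) (μ.prod ν) :=
    (hF2.mul_prod hG2).const_mul _
  have hi3 : Integrable (fun u : α × β =>
      (1/4) * ((ζ u₁.1 u₂.1 + (∫ x, ζ u.1 x ∂μ) - ζ u₂.1 u.1 - ∫ x, ζ u₁.1 x ∂μ)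
        * (g u₁.2 u₂.2 + (∫ v, g u.2 v ∂ν) - g u₂.2 u.2 - ∫ v, g u₁.2 v ∂ν))) (μ.prod ν) :=
    (hF3.mul_prod hG3).const_mul _
  have hi12 : Integrable (fun u : α × β =>
      (1/4) * ((ζ u₁.1 u₂.1 + (∫ x, ζ u.1 x ∂μ) - ζ u₁.1 u.1 - ∫ x, ζ u₂.1 x ∂μ)
        * (g u₁.2 u₂.2 + (∫ v, g u.2 v ∂ν) - g u₁.2 u.2 - ∫ v, g u₂.2 v ∂ν))
      + (1/4) * ((ζ u₂.1 u.1 + (∫ x, ζ u₁.1 x ∂μ) - ζ u₁.1 u.1 - ∫ x, ζ u₂.1 x ∂μ)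
        * (g u₂.2 u.2 + (∫ v, g u₁.2 v ∂ν) - g u₁.2 u.2 - ∫ v, g u₂.2 v ∂ν))) (μ.prod ν) :=
    hi1.add hi2
  unfold H2
  rw [integral_congr_ae hcong, integral_const_mul, integral_add hi12 hi3,
    integral_add hi1 hi2,
    integral_const_mul, integral_const_mul, integral_const_mul,
    integral_prod_mul
      (fun x => ζ u₁.1 u₂.1 + (∫ x', ζ x x' ∂μ) - ζ u₁.1 x - ∫ x', ζ u₂.1 x' ∂μ)
      (fun v => g u₁.2 u₂.2 + (∫ v', g v v' ∂ν) - g u₁.2 v - ∫ v', g u₂.2 v' ∂ν),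
    integral_prod_mul
      (fun x => ζ u₂.1 x + (∫ x', ζ u₁.1 x' ∂μ) - ζ u₁.1 x - ∫ x', ζ u₂.1 x' ∂μ)
      (fun v => g u₂.2 v + (∫ v', g u₁.2 v' ∂ν) - g u₁.2 v - ∫ v', g u₂.2 v' ∂ν),
    integral_prod_mul
      (fun x => ζ u₁.1 u₂.1 + (∫ x', ζ x x' ∂μ) - ζ u₂.1 x - ∫ x', ζ u₁.1 x' ∂μ)
      (fun v => g u₁.2 u₂.2 + (∫ v', g v v' ∂ν) - g u₂.2 v - ∫ v', g u₁.2 v' ∂ν),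
    int_comb μ _ _ hZcI h1x, int_comb ν _ _ hGcI h1v,
    int_comb2 μ _ _ h2x h1x, int_comb2 ν _ _ h2v h1v,
    int_comb μ _ _ hZcI h2x, int_comb ν _ _ hGcI h2v,
    hZc_mean, hGc_mean]
  unfold zetaTilde
  ring

end Stmt6Aux

/-- Under the null hypothesis (triples with law `ρ = (μ ⊗ ν) ⊗ μZ`),
with `k` bounded and finite second moments, the second-order projection factorizes a.e. as
`h_{b2}(w₁,w₂) = (1/6)·ζ̃(x₁,x₂)·ϱ̃((y₁,z₁),(y₂,z₂))`; consequently
`E[h_{b2}(W₁,W₂)²] = (1/36)·E[ζ̃(X₁,X₂)²]·E[ϱ̃((Y₁,Z₁),(Y₂,Z₂))²]`. -/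
theorem statement6 {𝒳 𝒴 : Type*} [MeasurableSpace 𝒳] [MeasurableSpace 𝒴]
    (ζ : 𝒳 → 𝒳 → ℝ) (η : 𝒴 → 𝒴 → ℝ) (k : ℝ → ℝ) (b : ℝ) (hb : 0 < b)
    (hζ_meas : Measurable fun p : 𝒳 × 𝒳 => ζ p.1 p.2)
    (hη_meas : Measurable fun p : 𝒴 × 𝒴 => η p.1 p.2)
    (hζ_symm : ∀ x x', ζ x x' = ζ x' x)
    (hη_symm : ∀ y y', η y y' = η y' y)
    (hk_meas : Measurable k)
    (Ck : ℝ) (hk_bdd : ∀ u, |k u| ≤ Ck)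
    (hk_nonneg : ∀ u, 0 ≤ k u) (hk_int : ∫ u, k u = 1)
    (hk_symm : ∀ u, k (-u) = k u)
    (μ : Measure 𝒳) [IsProbabilityMeasure μ]
    (ν : Measure 𝒴) [IsProbabilityMeasure ν]
    (μZ : Measure ℝ) [IsProbabilityMeasure μZ]
    (hζ_L2 : Integrable (fun p : 𝒳 × 𝒳 => (ζ p.1 p.2) ^ 2) (μ.prod μ))
    (hη_L2 : Integrable (fun p : 𝒴 × 𝒴 => (η p.1 p.2) ^ 2) (ν.prod ν)) :
    (∀ᵐ p ∂(((μ.prod ν).prod μZ).prod ((μ.prod ν).prod μZ)),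
      hb2 ζ η k b ((μ.prod ν).prod μZ) p.1 p.2 =
        (1 / 6) * zetaTilde ζ μ p.1.1.1 p.2.1.1 *
          rhoTilde η k b ν μZ (p.1.1.2, p.1.2) (p.2.1.2, p.2.2))
    ∧ (∫ p, (hb2 ζ η k b ((μ.prod ν).prod μZ) p.1 p.2) ^ 2
          ∂(((μ.prod ν).prod μZ).prod ((μ.prod ν).prod μZ)))
        = (1 / 36) * (∫ q, (zetaTilde ζ μ q.1 q.2) ^ 2 ∂(μ.prod μ)) *
            ∫ q, (rhoTilde η k b ν μZ q.1 q.2) ^ 2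
              ∂((ν.prod μZ).prod (ν.prod μZ)) := by
  -- notation
  have hg_symm : ∀ v v', Stmt6Aux.liftKer η k b v v' = Stmt6Aux.liftKer η k b v' v := by
    intro v v'
    unfold Stmt6Aux.liftKer
    rw [hη_symm]
    congr 1
    rw [show (v.2 - v'.2) / b = -((v'.2 - v.2) / b) by ring, hk_symm]
  -- L² ⇒ L¹
  have hζ_L1 : Integrable (fun p : 𝒳 × 𝒳 => ζ p.1 p.2) (μ.prod μ) := by
    refine Integrable.mono' ((hζ_L2.add (integrable_const 1)).div_const 2)
      hζ_meas.aestronglyMeasurable (Filter.Eventually.of_forall fun p => ?_)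
    simp only [Pi.add_apply, Real.norm_eq_abs]
    nlinarith [sq_nonneg (|ζ p.1 p.2| - 1), sq_abs (ζ p.1 p.2)]
  have hη_L1 : Integrable (fun p : 𝒴 × 𝒴 => η p.1 p.2) (ν.prod ν) := by
    refine Integrable.mono' ((hη_L2.add (integrable_const 1)).div_const 2)
      hη_meas.aestronglyMeasurable (Filter.Eventually.of_forall fun p => ?_)
    simp only [Pi.add_apply, Real.norm_eq_abs]
    nlinarith [sq_nonneg (|η p.1 p.2| - 1), sq_abs (η p.1 p.2)]
  -- the lifted kernel is integrable on (ν ⊗ μZ)²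
  have hmpfst : MeasurePreserving (Prod.fst : 𝒴 × ℝ → 𝒴) (ν.prod μZ) ν :=
    ⟨measurable_fst, by rw [Measure.map_fst_prod, measure_univ, one_smul]⟩
  have hg_meas : Measurable (fun p : (𝒴 × ℝ) × (𝒴 × ℝ) =>
      Stmt6Aux.liftKer η k b p.1 p.2) := by
    unfold Stmt6Aux.liftKer
    exact (hη_meas.comp (measurable_fst.fst.prodMk measurable_snd.fst)).mul
      (hk_meas.comp ((measurable_fst.snd.sub measurable_snd.snd).div_const b))
  have hgI : Integrable (fun p : (𝒴 × ℝ) × (𝒴 × ℝ) => Stmt6Aux.liftKer η k b p.1 p.2)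
      ((ν.prod μZ).prod (ν.prod μZ)) := by
    have hmp : MeasurePreserving (Prod.map (Prod.fst : 𝒴 × ℝ → 𝒴) Prod.fst)
        ((ν.prod μZ).prod (ν.prod μZ)) (ν.prod ν) := hmpfst.prod hmpfst
    have hηcomp : Integrable (fun p : (𝒴 × ℝ) × (𝒴 × ℝ) => η p.1.1 p.2.1)
        ((ν.prod μZ).prod (ν.prod μZ)) :=
      (hmp.integrable_comp hη_L1.aestronglyMeasurable).mpr hη_L1
    refine Integrable.mono' (hηcomp.abs.const_mul Ck) hg_meas.aestronglyMeasurable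
      (Filter.Eventually.of_forall fun p => ?_)
    simp only [Real.norm_eq_abs, Stmt6Aux.liftKer, abs_mul]
    calc |η p.1.1 p.2.1| * |k ((p.1.2 - p.2.2) / b)| ≤ |η p.1.1 p.2.1| * Ck :=
          mul_le_mul_of_nonneg_left (hk_bdd _) (abs_nonneg _)
      _ = Ck * |η p.1.1 p.2.1| := mul_comm _ _
  -- measure-preserving reassociation
  have hpa : MeasurePreserving
      (⇑(MeasurableEquiv.prodAssoc : (𝒳 × 𝒴) × ℝ ≃ᵐ 𝒳 × 𝒴 × ℝ))
      ((μ.prod ν).prod μZ) (μ.prod (ν.prod μZ)) := measurePreserving_prodAssoc μ ν μZ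
  -- hb2 in terms of the abstract H2
  have hb2_eq : ∀ w₁ w₂, hb2 ζ η k b ((μ.prod ν).prod μZ) w₁ w₂ =
      Stmt6Aux.H2 ζ (Stmt6Aux.liftKer η k b) (μ.prod (ν.prod μZ))
        (MeasurableEquiv.prodAssoc w₁) (MeasurableEquiv.prodAssoc w₂) := by
    intro w₁ w₂
    calc hb2 ζ η k b ((μ.prod ν).prod μZ) w₁ w₂
        = ∫ w₃, (∫ w₄, Stmt6Aux.Hbar ζ (Stmt6Aux.liftKer η k b)
            (MeasurableEquiv.prodAssoc w₁) (MeasurableEquiv.prodAssoc w₂)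
            (MeasurableEquiv.prodAssoc w₃) (MeasurableEquiv.prodAssoc w₄)
            ∂((μ.prod ν).prod μZ)) ∂((μ.prod ν).prod μZ) := rfl
      _ = ∫ w₃, (∫ u₄, Stmt6Aux.Hbar ζ (Stmt6Aux.liftKer η k b)
            (MeasurableEquiv.prodAssoc w₁) (MeasurableEquiv.prodAssoc w₂)
            (MeasurableEquiv.prodAssoc w₃) u₄ ∂(μ.prod (ν.prod μZ)))
            ∂((μ.prod ν).prod μZ) :=
          integral_congr_ae (Filter.Eventually.of_forall fun w₃ => hpa.integral_comp' _)
      _ = ∫ u₃, (∫ u₄, Stmt6Aux.Hbar ζ (Stmt6Aux.liftKer η k b)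
            (MeasurableEquiv.prodAssoc w₁) (MeasurableEquiv.prodAssoc w₂)
            u₃ u₄ ∂(μ.prod (ν.prod μZ))) ∂(μ.prod (ν.prod μZ)) :=
          hpa.integral_comp' (fun u₃ => ∫ u₄, Stmt6Aux.Hbar ζ (Stmt6Aux.liftKer η k b)
            (MeasurableEquiv.prodAssoc w₁) (MeasurableEquiv.prodAssoc w₂) u₃ u₄
            ∂(μ.prod (ν.prod μZ)))
  -- a.e. goodness on the π ⊗ π side
  have h0 : ∀ᵐ w ∂(μ.prod (ν.prod μZ)),
      Integrable (ζ w.1) μ ∧ Integrable (Stmt6Aux.liftKer η k b w.2) (ν.prod μZ) := by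
    have h1 : ∀ᵐ x ∂μ, Integrable (ζ x) μ := hζ_L1.prod_right_ae
    have h2 : ∀ᵐ v ∂(ν.prod μZ), Integrable (Stmt6Aux.liftKer η k b v) (ν.prod μZ) :=
      hgI.prod_right_ae
    exact (Stmt6Aux.ae_fst μ (ν.prod μZ) h1).and (Stmt6Aux.ae_snd μ (ν.prod μZ) h2)
  have haeπ : ∀ᵐ u ∂((μ.prod (ν.prod μZ)).prod (μ.prod (ν.prod μZ))),
      (Integrable (ζ u.1.1) μ ∧ Integrable (Stmt6Aux.liftKer η k b u.1.2) (ν.prod μZ)) ∧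
      (Integrable (ζ u.2.1) μ ∧ Integrable (Stmt6Aux.liftKer η k b u.2.2) (ν.prod μZ)) :=
    (Stmt6Aux.ae_fst _ _ h0).and (Stmt6Aux.ae_snd _ _ h0)
  have hpa2 : MeasurePreserving
      (Prod.map (⇑(MeasurableEquiv.prodAssoc : (𝒳 × 𝒴) × ℝ ≃ᵐ 𝒳 × 𝒴 × ℝ))
        (⇑(MeasurableEquiv.prodAssoc : (𝒳 × 𝒴) × ℝ ≃ᵐ 𝒳 × 𝒴 × ℝ)))
      (((μ.prod ν).prod μZ).prod ((μ.prod ν).prod μZ))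
      ((μ.prod (ν.prod μZ)).prod (μ.prod (ν.prod μZ))) := hpa.prod hpa
  have haeρ : ∀ᵐ p ∂(((μ.prod ν).prod μZ).prod ((μ.prod ν).prod μZ)),
      (Integrable (ζ p.1.1.1) μ ∧
        Integrable (Stmt6Aux.liftKer η k b (p.1.1.2, p.1.2)) (ν.prod μZ)) ∧
      (Integrable (ζ p.2.1.1) μ ∧
        Integrable (Stmt6Aux.liftKer η k b (p.2.1.2, p.2.2)) (ν.prod μZ)) :=
    ae_of_ae_map hpa2.measurable.aemeasurable (by rwa [hpa2.map_eq])
  have conj1 : ∀ᵐ p ∂(((μ.prod ν).prod μZ).prod ((μ.prod ν).prod μZ)),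
      hb2 ζ η k b ((μ.prod ν).prod μZ) p.1 p.2 =
        (1 / 6) * zetaTilde ζ μ p.1.1.1 p.2.1.1 *
          rhoTilde η k b ν μZ (p.1.1.2, p.1.2) (p.2.1.2, p.2.2) := by
    filter_upwards [haeρ] with p hp
    rw [hb2_eq p.1 p.2]
    exact Stmt6Aux.H2_eq ζ (Stmt6Aux.liftKer η k b) μ (ν.prod μZ) hζ_symm hg_symm
      hζ_L1 hgI (MeasurableEquiv.prodAssoc p.1) (MeasurableEquiv.prodAssoc p.2)
      hp.1.1 hp.2.1 hp.1.2 hp.2.2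
  refine ⟨conj1, ?_⟩
  -- the interleaving measure-preserving equivalence
  have cA := measurePreserving_prodAssoc μ (ν.prod μZ) (μ.prod (ν.prod μZ))
  have c1 := (measurePreserving_prodAssoc (ν.prod μZ) μ (ν.prod μZ)).symm
    MeasurableEquiv.prodAssoc
  have c2 : MeasurePreserving
      (Prod.map (Prod.swap : (𝒴 × ℝ) × 𝒳 → 𝒳 × (𝒴 × ℝ)) (id : 𝒴 × ℝ → 𝒴 × ℝ))
      (((ν.prod μZ).prod μ).prod (ν.prod μZ)) ((μ.prod (ν.prod μZ)).prod (ν.prod μZ)) :=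
    Measure.measurePreserving_swap.prod (MeasurePreserving.id _)
  have c3 := measurePreserving_prodAssoc μ (ν.prod μZ) (ν.prod μZ)
  have hinner_mp : MeasurePreserving
      (fun r : (𝒴 × ℝ) × (𝒳 × (𝒴 × ℝ)) => (r.2.1, (r.1, r.2.2)))
      ((ν.prod μZ).prod (μ.prod (ν.prod μZ))) (μ.prod ((ν.prod μZ).prod (ν.prod μZ))) :=
    (c3.comp (c2.comp c1))
  have cB : MeasurePreserving
      (Prod.map (id : 𝒳 → 𝒳)
        (fun r : (𝒴 × ℝ) × (𝒳 × (𝒴 × ℝ)) => (r.2.1, (r.1, r.2.2))))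
      ((μ.prod ((ν.prod μZ).prod (μ.prod (ν.prod μZ)))))
      (μ.prod (μ.prod ((ν.prod μZ).prod (ν.prod μZ)))) :=
    (MeasurePreserving.id μ).prod hinner_mp
  have cC := (measurePreserving_prodAssoc μ μ ((ν.prod μZ).prod (ν.prod μZ))).symm
    MeasurableEquiv.prodAssoc
  have hT : MeasurePreserving
      (fun q : (𝒳 × (𝒴 × ℝ)) × (𝒳 × (𝒴 × ℝ)) => ((q.1.1, q.2.1), (q.1.2, q.2.2)))
      ((μ.prod (ν.prod μZ)).prod (μ.prod (ν.prod μZ)))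
      ((μ.prod μ).prod ((ν.prod μZ).prod (ν.prod μZ))) := cC.comp (cB.comp cA)
  -- conclude the second statement
  calc ∫ p, (hb2 ζ η k b ((μ.prod ν).prod μZ) p.1 p.2) ^ 2
        ∂(((μ.prod ν).prod μZ).prod ((μ.prod ν).prod μZ))
      = ∫ p, ((1 / 6) * zetaTilde ζ μ p.1.1.1 p.2.1.1 *
          rhoTilde η k b ν μZ (p.1.1.2, p.1.2) (p.2.1.2, p.2.2)) ^ 2
          ∂(((μ.prod ν).prod μZ).prod ((μ.prod ν).prod μZ)) :=
        integral_congr_ae (conj1.mono fun p hp => by dsimp only; rw [hp])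
    _ = ∫ q, ((1 / 6) * zetaTilde ζ μ q.1.1 q.2.1 *
          zetaTilde (Stmt6Aux.liftKer η k b) (ν.prod μZ) q.1.2 q.2.2) ^ 2
          ∂((μ.prod (ν.prod μZ)).prod (μ.prod (ν.prod μZ))) :=
        hpa2.integral_comp (MeasurableEquiv.prodAssoc.prodCongr
          MeasurableEquiv.prodAssoc).measurableEmbedding
          (fun q => ((1 / 6) * zetaTilde ζ μ q.1.1 q.2.1 *
            zetaTilde (Stmt6Aux.liftKer η k b) (ν.prod μZ) q.1.2 q.2.2) ^ 2)
    _ = ∫ q, (1 / 36) * ((zetaTilde ζ μ q.1.1 q.2.1) ^ 2 *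
          (zetaTilde (Stmt6Aux.liftKer η k b) (ν.prod μZ) q.1.2 q.2.2) ^ 2)
          ∂((μ.prod (ν.prod μZ)).prod (μ.prod (ν.prod μZ))) :=
        integral_congr_ae (Filter.Eventually.of_forall fun q => by ring)
    _ = ∫ r, (1 / 36) * ((zetaTilde ζ μ r.1.1 r.1.2) ^ 2 *
          (zetaTilde (Stmt6Aux.liftKer η k b) (ν.prod μZ) r.2.1 r.2.2) ^ 2)
          ∂((μ.prod μ).prod ((ν.prod μZ).prod (ν.prod μZ))) := by
        refine hT.integral_comp ?_ (fun r => (1 / 36) * ((zetaTilde ζ μ r.1.1 r.1.2) ^ 2 *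
          (zetaTilde (Stmt6Aux.liftKer η k b) (ν.prod μZ) r.2.1 r.2.2) ^ 2))
        exact (MeasurableEquiv.prodAssoc.trans
          (((MeasurableEquiv.refl 𝒳).prodCongr
            ((MeasurableEquiv.prodAssoc.symm).trans
              ((MeasurableEquiv.prodComm.prodCongr (MeasurableEquiv.refl (𝒴 × ℝ))).trans
                MeasurableEquiv.prodAssoc))).trans
            MeasurableEquiv.prodAssoc.symm)).measurableEmbedding
    _ = (1 / 36) * (∫ q, (zetaTilde ζ μ q.1 q.2) ^ 2 ∂(μ.prod μ)) *
          ∫ q, (zetaTilde (Stmt6Aux.liftKer η k b) (ν.prod μZ) q.1 q.2) ^ 2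
            ∂((ν.prod μZ).prod (ν.prod μZ)) := by
        rw [integral_const_mul,
          integral_prod_mul (fun s : 𝒳 × 𝒳 => (zetaTilde ζ μ s.1 s.2) ^ 2)
            (fun s : (𝒴 × ℝ) × (𝒴 × ℝ) =>
              (zetaTilde (Stmt6Aux.liftKer η k b) (ν.prod μZ) s.1 s.2) ^ 2)]
        ring
    _ = (1 / 36) * (∫ q, (zetaTilde ζ μ q.1 q.2) ^ 2 ∂(μ.prod μ)) *
          ∫ q, (rhoTilde η k b ν μZ q.1 q.2) ^ 2
            ∂((ν.prod μZ).prod (ν.prod μZ)) := rfl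
end
end
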